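/- arXiv:1703.06356 — 12 statements merged into one kernel-verified Lean document; each statement's English description precedes it below -/
import Mathlib

section
/- Let A = (Q, Σ, δ) be a deterministic finite automaton that is monotonic, i.e., there is a linear order ≤ on Q such that for every letter x ∈ Σ, q₁ ≤ q₂ implies δ(q₁,x) ≤ δ(q₂,x). Then a subset S ⊆ Q is synchronizing (there exists a word w and a state q with δ(s,w) = q for all s ∈ S) if and only if every two-element subset of S is synchronizing. -/
/-! A word acts monotonically on the states of a monotonic automaton, and a monotone map that
identifies the endpoints of an interval collapses the whole interval. Hence a word synchronizing
the least and the greatest state of a finite set `S` synchronizes all of `S`. -/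

theorem Monotone.eq_of_mem_Icc {α β : Type*} [Preorder α] [PartialOrder β] {f : α → β}
    (hf : Monotone f) {a b x : α} (hab : f a = f b) (hx : x ∈ Set.Icc a b) : f x = f a :=
  le_antisymm (hab ▸ hf hx.2) (hf hx.1)

theorem Set.Finite.exists_subset_Icc {α : Type*} [LinearOrder α] {S : Set α} (hS : S.Finite)
    (hne : S.Nonempty) : ∃ a ∈ S, ∃ b ∈ S, S ⊆ Set.Icc a b := by
  obtain ⟨a, ha, hmin⟩ := S.exists_min_image id hS hne
  obtain ⟨b, hb, hmax⟩ := S.exists_max_image id hS hne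
  exact ⟨a, ha, b, hb, fun x hx => ⟨hmin x hx, hmax x hx⟩⟩

section Synchronizing

variable {Q A : Type*} (δ : Q → A → Q)

def IsSynchronizing (S : Set Q) : Prop :=
  ∃ (w : List A) (q : Q), ∀ s ∈ S, w.foldl δ s = q

variable {δ}

theorem IsSynchronizing.mono {S T : Set Q} (h : IsSynchronizing δ T) (hST : S ⊆ T) :
    IsSynchronizing δ S :=
  let ⟨w, q, hq⟩ := h
  ⟨w, q, fun s hs => hq s (hST hs)⟩

theorem isSynchronizing_empty [Nonempty Q] : IsSynchronizing δ ∅ :=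
  ⟨[], Classical.arbitrary Q, fun _ hs => hs.elim⟩

theorem IsSynchronizing.of_subset_Icc [PartialOrder Q]
    (hmono : ∀ x : A, Monotone (fun q => δ q x)) {a b : Q} {S : Set Q} (h : IsSynchronizing δ {a, b}) (hS : S ⊆ Set.Icc a b) :
    IsSynchronizing δ S := by
  obtain ⟨w, q, hq⟩ := h
  have hab : w.foldl δ a = w.foldl δ b := (hq a (.inl rfl)).trans (hq b (.inr rfl)).symm
  have hw : Monotone (fun s => w.foldl δ s) := List.foldl_monotone hmono w
  exact ⟨w, q, fun s hs => (hw.eq_of_mem_Icc hab (hS hs)).trans (hq a (.inl rfl))⟩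

end Synchronizing

theorem stmt0_general {Q A : Type*} [Fintype Q] [Nonempty Q] [LinearOrder Q]
    (δ : Q → A → Q) (hmono : ∀ x : A, Monotone (fun q => δ q x)) (S : Set Q) :
    (∃ (w : List A) (q : Q), ∀ s ∈ S, w.foldl δ s = q) ↔
      (∀ a ∈ S, ∀ b ∈ S, ∃ (w : List A) (q : Q),
        ∀ s ∈ ({a, b} : Set Q), w.foldl δ s = q) := by
  change IsSynchronizing δ S ↔ ∀ a ∈ S, ∀ b ∈ S, IsSynchronizing δ {a, b}
  refine ⟨fun h a ha b hb => h.mono (Set.pair_subset ha hb), fun h => ?_⟩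
  rcases S.eq_empty_or_nonempty with rfl | hne
  · exact isSynchronizing_empty
  obtain ⟨a, ha, b, hb, hab⟩ := S.toFinite.exists_subset_Icc hne
  exact (h a ha b hb).of_subset_Icc hmono hab

/-- A subset `S` of states of a monotonic DFA is synchronizing iff every pair
of states of `S` is synchronizing. -/
theorem stmt0 {Q A : Type*} [Fintype Q] [Nonempty Q] [Fintype A] [LinearOrder Q]
    (δ : Q → A → Q) (hmono : ∀ x : A, Monotone (fun q => δ q x)) (S : Set Q) :
    (∃ (w : List A) (q : Q), ∀ s ∈ S, w.foldl δ s = q) ↔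
      (∀ a ∈ S, ∀ b ∈ S, ∃ (w : List A) (q : Q),
        ∀ s ∈ ({a, b} : Set Q), w.foldl δ s = q) :=
  stmt0_general δ hmono S
end

section
/- In a monotonic automaton, any word of minimum length synchronizing the pair {min S, max S} is a word of minimum length synchronizing S, for any nonempty subset S of states. -/
theorem Monotone.apply_eq_of_le_of_le {α β : Type*} [Preorder α] [PartialOrder β] {f : α → β}
    (hf : Monotone f) {a b x : α} (hab : f a = f b) (hax : a ≤ x) (hxb : x ≤ b) : f x = f a :=
  le_antisymm (hab ▸ hf hxb) (hf hax)

/-- In a monotonic automaton, any shortest word synchronizing `{min S, max S}`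
is a shortest word synchronizing `S`. -/
theorem stmt2 {Q A : Type*} [LinearOrder Q] (δ : Q → A → Q)
    (hmono : ∀ x : A, Monotone (fun q => δ q x))
    (S : Set Q) (ql qr : Q) (hql : ql ∈ S) (hqr : qr ∈ S)
    (hmin : ∀ s ∈ S, ql ≤ s) (hmax : ∀ s ∈ S, s ≤ qr)
    (w : List A) (hw : w.foldl δ ql = w.foldl δ qr)
    (hshort : ∀ w' : List A, w'.foldl δ ql = w'.foldl δ qr → w.length ≤ w'.length) :
    (∃ q : Q, ∀ s ∈ S, w.foldl δ s = q) ∧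
      (∀ w' : List A, (∃ q : Q, ∀ s ∈ S, w'.foldl δ s = q) → w.length ≤ w'.length) := by
  refine ⟨⟨w.foldl δ ql, fun s hs => ?_⟩, ?_⟩
  · exact (List.foldl_monotone hmono w).apply_eq_of_le_of_le hw (hmin s hs) (hmax s hs)
  · rintro w' ⟨q, hq⟩
    exact hshort w' ((hq ql hql).trans (hq qr hqr).symm)
end

section
/- For every positive integer k₀ there exist a deterministic finite automaton A over the binary alphabet {0,1} that is weakly acyclic, and a subset S of its states with |S| ≥ k₀, such that every pair of states in S is synchronizing, but the rank of S equals |S| − 1 (in particular, S itself is not synchronizing when |S| ≥ 2). -/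
/-!
Each state of `S` carries a clock which the letter `false` advances. The `k²` clock values
enumerate the pairs `(t / k, t % k)`, and reading `true` at time `t` sends the two states of
that pair to a common sink and every other state of `S` to a private sink. So the pair
`(a, b)` is synchronized by `false^(k a + b) true`, while no word merges more than one pair.
-/

open Finset

namespace Finset

variable {α β : Type*} [DecidableEq β] {s : Finset α} {g : α → β} {a b : α}

lemma card_sub_one_le_card_image_of_injOn_erase [DecidableEq α]
    (h : Set.InjOn g (s.erase a)) : #s - 1 ≤ #(s.image g) :=
  calc #s - 1 ≤ #(s.erase a) := pred_card_le_card_erase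
    _ = #((s.erase a).image g) := (card_image_of_injOn h).symm
    _ ≤ #(s.image g) := card_le_card (image_subset_image (erase_subset a s))

lemma card_image_lt_of_apply_eq (ha : a ∈ s) (hb : b ∈ s) (hab : a ≠ b) (h : g a = g b) :
    #(s.image g) < #s :=
  card_image_le.lt_of_ne fun hinj => hab (card_image_iff.mp hinj ha hb h)

end Finset

lemma Nat.mul_add_div_of_lt {k t i : ℕ} (hi : i < k) : (k * t + i) / k = t := by
  rw [Nat.mul_add_div (by omega), Nat.div_eq_of_lt hi, add_zero]

lemma Nat.mul_add_mod_of_lt' {k t i : ℕ} (hi : i < k) : (k * t + i) % k = i := by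
  rw [Nat.mul_add_mod, Nat.mod_eq_of_lt hi]

namespace PairClockAutomaton

/-- A state `q < k * k²` is `k * t + i`: agent `i < k` at time `t < k²`. The states
`k * k² + i` are sinks, private for `i < k` and common for `i = k`. -/
def step (k q : ℕ) : Bool → ℕ
  | false => if q < k * (k * k) then q + k else q
  | true =>
    if q < k * (k * k) then
      k * (k * k) + if q % k = q / k / k ∨ q % k = q / k % k then k else q % k
    else q

def numStates (k : ℕ) : ℕ := k * (k * k) + k + 1

variable {k t i : ℕ}

lemma le_step (k q : ℕ) (x : Bool) : q ≤ step k q x := by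
  cases x <;> simp only [step] <;> split_ifs <;> omega

lemma step_of_le {q : ℕ} (hq : k * (k * k) ≤ q) (x : Bool) : step k q x = q := by
  cases x <;> simp [step, not_lt.mpr hq]

lemma step_lt_numStates {q : ℕ} (hq : q < numStates k) (x : Bool) :
    step k q x < numStates k := by
  unfold numStates at *
  rcases le_or_gt (k * (k * k)) q with hsink | hactive
  · rwa [step_of_le hsink]
  · have : q % k < k := Nat.mod_lt q (Nat.pos_of_ne_zero (by rintro rfl; simp at hactive))
    cases x
    · simp only [step, if_pos hactive]; omega
    · simp only [step, if_pos hactive]; split_ifs <;> omega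

lemma step_false (ht : t < k * k) (hi : i < k) :
    step k (k * t + i) false = k * (t + 1) + i := by
  have : k * (t + 1) ≤ k * (k * k) := Nat.mul_le_mul_left k ht
  simp only [step, if_pos (by linarith : k * t + i < k * (k * k))]
  ring

lemma step_true (ht : t < k * k) (hi : i < k) :
    step k (k * t + i) true = k * (k * k) + if i = t / k ∨ i = t % k then k else i := by
  have : k * (t + 1) ≤ k * (k * k) := Nat.mul_le_mul_left k ht
  simp only [step, if_pos (by linarith : k * t + i < k * (k * k)), Nat.mul_add_div_of_lt hi,
    Nat.mul_add_mod_of_lt' hi]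

lemma foldl_replicate_false (ht : t ≤ k * k) (hi : i < k) :
    (List.replicate t false).foldl (step k) i = k * t + i := by
  induction t with
  | zero => simp
  | succ t ih =>
    rw [List.replicate_succ', List.foldl_append, ih (by omega), List.foldl_cons, List.foldl_nil,
      step_false (by omega) hi]

lemma foldl_step_merge {a b : ℕ} (ha : a < k) (hb : b < k) (hi : i = a ∨ i = b) :
    (List.replicate (k * a + b) false ++ [true]).foldl (step k) i = k * (k * k) + k := by
  have ht : k * a + b < k * k := by nlinarith
  have hik : i < k := by omega
  rw [List.foldl_append, foldl_replicate_false ht.le hik, List.foldl_cons, List.foldl_nil,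
    step_true ht hik, Nat.mul_add_div_of_lt hb, Nat.mul_add_mod_of_lt' hb, if_pos hi]

lemma foldl_step_cases (w : List Bool) :
    (∃ t ≤ k * k, ∀ i < k, w.foldl (step k) i = k * t + i) ∨
    (∃ a < k, ∃ b, ∀ i < k,
      w.foldl (step k) i = k * (k * k) + if i = a ∨ i = b then k else i) := by
  induction w using List.reverseRecOn with
  | nil => exact .inl ⟨0, Nat.zero_le _, fun i _ => by simp⟩
  | append_singleton w x ih =>
    simp only [List.foldl_append, List.foldl_cons, List.foldl_nil]
    rcases ih with ⟨t, ht, hw⟩ | ⟨a, ha, b, hw⟩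
    · rcases ht.lt_or_eq with ht | rfl
      · cases x
        · exact .inl ⟨t + 1, ht, fun i hi => by rw [hw i hi, step_false ht hi]⟩
        · refine .inr ⟨t / k, Nat.div_lt_of_lt_mul ht, t % k, fun i hi => ?_⟩
          rw [hw i hi, step_true ht hi]
      · exact .inl ⟨k * k, le_rfl, fun i hi => by rw [hw i hi, step_of_le (by omega)]⟩
    · exact .inr ⟨a, ha, b, fun i hi => by rw [hw i hi, step_of_le (by omega)]⟩

def delta (k : ℕ) (q : Fin (numStates k)) (x : Bool) : Fin (numStates k) :=
  ⟨step k q x, step_lt_numStates q.isLt x⟩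

def agents (k : ℕ) : Finset (Fin (numStates k)) :=
  Iio ⟨k, by unfold numStates; omega⟩

lemma le_delta (q : Fin (numStates k)) (x : Bool) : q ≤ delta k q x :=
  Fin.le_def.mpr (le_step k q x)

lemma val_foldl_delta (w : List Bool) (q : Fin (numStates k)) :
    (w.foldl (delta k) q).val = w.foldl (step k) q.val :=
  (List.foldl_hom Fin.val fun _ _ => rfl).symm

lemma mem_agents {q : Fin (numStates k)} : q ∈ agents k ↔ (q : ℕ) < k := by
  simp [agents, Fin.lt_def]

lemma card_agents (k : ℕ) : #(agents k) = k := Fin.card_Iio _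

lemma exists_foldl_delta_eq {a b : Fin (numStates k)} (ha : a ∈ agents k)
    (hb : b ∈ agents k) : ∃ w : List Bool, w.foldl (delta k) a = w.foldl (delta k) b := by
  rw [mem_agents] at ha hb
  refine ⟨List.replicate (k * a + b) false ++ [true], Fin.ext ?_⟩
  rw [val_foldl_delta, val_foldl_delta, foldl_step_merge ha hb (.inl rfl),
    foldl_step_merge ha hb (.inr rfl)]

lemma exists_injOn_erase_foldl_delta (w : List Bool) :
    ∃ a, Set.InjOn (w.foldl (delta k)) ((agents k).erase a) := by
  rcases foldl_step_cases w with ⟨t, -, hw⟩ | ⟨a, ha, b, hw⟩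
  · refine ⟨⟨0, by unfold numStates; omega⟩, fun x hx y hy hxy => Fin.ext ?_⟩
    simp only [coe_erase, Set.mem_sdiff, mem_coe, mem_agents] at hx hy
    have := congrArg Fin.val hxy
    rw [val_foldl_delta, val_foldl_delta, hw x hx.1, hw y hy.1] at this
    omega
  · refine ⟨⟨a, by unfold numStates; omega⟩, fun x hx y hy hxy => Fin.ext ?_⟩
    simp only [coe_erase, Set.mem_sdiff, mem_coe, mem_agents, Set.mem_singleton_iff,
      Fin.ext_iff] at hx hy
    have := congrArg Fin.val hxy
    rw [val_foldl_delta, val_foldl_delta, hw x hx.1, hw y hy.1] at this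
    split_ifs at this <;> omega

end PairClockAutomaton

open PairClockAutomaton in
theorem stmt5_general (k0 : ℕ) :
    ∃ (n : ℕ) (δ : Fin n → Bool → Fin n) (S : Finset (Fin n)),
      (∀ (q : Fin n) (x : Bool), q ≤ δ q x) ∧
      k0 ≤ S.card ∧
      (∀ a ∈ S, ∀ b ∈ S, ∃ w : List Bool, w.foldl δ a = w.foldl δ b) ∧
      (∃ w : List Bool, (S.image (fun s => w.foldl δ s)).card = S.card - 1) ∧
      (∀ w : List Bool, S.card - 1 ≤ (S.image (fun s => w.foldl δ s)).card) := by
  set k := max k0 2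
  have rank_ge (w : List Bool) : #(agents k) - 1 ≤ #((agents k).image (w.foldl (delta k))) :=
    have ⟨_, hinj⟩ := exists_injOn_erase_foldl_delta w
    card_sub_one_le_card_image_of_injOn_erase hinj
  refine ⟨numStates k, delta k, agents k, le_delta, (card_agents k).symm ▸ le_max_left k0 2,
    fun a ha b hb => exists_foldl_delta_eq ha hb, ?_, rank_ge⟩
  have h0 : (⟨0, by unfold numStates; omega⟩ : Fin (numStates k)) ∈ agents k :=
    mem_agents.mpr (show 0 < k by omega)
  have h1 : (⟨1, by unfold numStates; omega⟩ : Fin (numStates k)) ∈ agents k :=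
    mem_agents.mpr (show 1 < k by omega)
  obtain ⟨w, hw⟩ := exists_foldl_delta_eq h0 h1
  exact ⟨w, le_antisymm
    (Nat.le_sub_one_of_lt (card_image_lt_of_apply_eq h0 h1 (by simp) hw)) (rank_ge w)⟩

/-- For every positive `k₀` there is a binary weakly acyclic DFA and a subset
`S` of its states with `|S| ≥ k₀` such that every pair of states of `S` is
synchronizing but the rank of `S` equals `|S| - 1`. -/
theorem stmt5 (k0 : ℕ) (hk : 0 < k0) :
    ∃ (n : ℕ) (δ : Fin n → Bool → Fin n) (S : Finset (Fin n)),
      (∀ (q : Fin n) (x : Bool), q ≤ δ q x) ∧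
      k0 ≤ S.card ∧
      (∀ a ∈ S, ∀ b ∈ S, ∃ w : List Bool, w.foldl δ a = w.foldl δ b) ∧
      (∃ w : List Bool, (S.image (fun s => w.foldl δ s)).card = S.card - 1) ∧
      (∀ w : List Bool, S.card - 1 ≤ (S.image (fun s => w.foldl δ s)).card) :=
  stmt5_general k0
end

section
/- For each m ≥ 1 there exists a monotonic automaton with 2m+3 states over a three-letter alphabet and a two-element subset S of its states such that S is synchronizing and the shortest word synchronizing S has length exactly m² + m. -/
/-!
Number the states `q₁, …, q_{2m+3}` as `0, …, 2m+2`, so that `S = {1, 2m+1}`. The sinks `0`,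
`m+1`, `2m+2` split the automaton into a left chain, on which only the letter `0` moves forward,
and a right chain, on which the letter `0` is harmless only at its centre `m+2`, whence it jumps
back to the far end `2m+1`. By monotonicity a pair `p ≤ m+1 ≤ q` can only meet at `m+1`, and
becomes unsynchronizable as soon as `p` falls into `0` or `q` into `2m+2`. Hence each of the `m`
forward steps of `p` costs a full walk of `m` letters of `q` along the right chain, and the
potential `(m+1-p)·m + (q-(m+1))` drops by at most one per letter.
-/

section Automaton

variable {α σ : Type*}

theorem List.foldl_replicate_eq_iterate (f : α → σ → α) (x : σ) (n : ℕ) (a : α) :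
    (List.replicate n x).foldl f a = (f · x)^[n] a := by
  induction n generalizing a with
  | zero => rfl
  | succ n ih => simp [List.replicate_succ, ih]

theorem potential_le_length_of_foldl_eq (δ : α → σ → α) (Φ : α → α → ℕ) (live : α → α → Prop)
    (hdiag : ∀ a, live a a → Φ a a = 0)
    (hstep : ∀ a b x, live a b → (∃ w : List σ, w.foldl δ (δ a x) = w.foldl δ (δ b x)) →
      live (δ a x) (δ b x) ∧ Φ a b ≤ Φ (δ a x) (δ b x) + 1) :
    ∀ (w : List σ) (a b : α), live a b → w.foldl δ a = w.foldl δ b → Φ a b ≤ w.length := by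
  intro w
  induction w with
  | nil =>
    rintro a b hab (rfl : a = b)
    simp [hdiag a hab]
  | cons x w ih =>
    intro a b hab hw
    obtain ⟨hlive, hΦ⟩ := hstep a b x hab ⟨w, hw⟩
    have := ih _ _ hlive hw
    simp only [List.length_cons]
    omega

theorem foldl_lt_foldl_of_le_sink_lt_sink [Preorder α] {δ : α → σ → α}
    (hδ : ∀ x, Monotone (δ · x)) {a b s t : α} (hs : ∀ x, δ s x = s) (ht : ∀ x, δ t x = t)
    (has : a ≤ s) (hst : s < t) (htb : t ≤ b) (w : List σ) : w.foldl δ a < w.foldl δ b :=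
  calc w.foldl δ a ≤ w.foldl δ s := List.foldl_monotone hδ w has
    _ = s := List.foldl_fixed' hs w
    _ < t := hst
    _ = w.foldl δ t := (List.foldl_fixed' ht w).symm
    _ ≤ w.foldl δ b := List.foldl_monotone hδ w htb

end Automaton

theorem Function.iterate_eq_add_of_eq_succ {g : ℕ → ℕ} {a b : ℕ}
    (hg : ∀ p, a ≤ p → p < b → g p = p + 1) (j : ℕ) (hj : a + j ≤ b) : g^[j] a = a + j := by
  induction j with
  | zero => rfl
  | succ j ih => rw [Function.iterate_succ_apply', ih (by omega), hg _ (by omega) (by omega)]; rfl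

theorem Function.iterate_eq_sub_of_eq_pred {g : ℕ → ℕ} {a b : ℕ}
    (hg : ∀ q, b < q → q ≤ a → g q = q - 1) (k : ℕ) (hk : b + k ≤ a) : g^[k] a = a - k := by
  induction k with
  | zero => rfl
  | succ k ih => rw [Function.iterate_succ_apply', ih (by omega), hg _ (by omega) (by omega)]; omega

namespace QuadraticSubsetSync

/-- States beyond `2m+2` are junk. -/
def delta (m : ℕ) : ℕ → Fin 3 → ℕ
  | q, 0 => if q = 0 ∨ q = m + 1 then q else if q ≤ m then q + 1
      else if q = m + 2 then 2 * m + 1 else 2 * m + 2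
  | q, 1 => if m + 3 ≤ q ∧ q ≤ 2 * m + 1 then q - 1 else q
  | q, 2 => if 1 ≤ q ∧ q ≤ m then 0 else if q = m + 2 then m + 1 else q

def LivePair (m p q : ℕ) : Prop := 1 ≤ p ∧ p ≤ m + 1 ∧ m + 1 ≤ q ∧ q ≤ 2 * m + 1

def potential (m p q : ℕ) : ℕ := if q = m + 1 then m + 1 - p else (m + 1 - p) * m + (q - (m + 1))

theorem delta_lt (m : ℕ) {q : ℕ} (hq : q < 2 * m + 3) (x : Fin 3) : delta m q x < 2 * m + 3 := by
  fin_cases x <;> simp only [delta] <;> split_ifs <;> omega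

theorem delta_monotone (m : ℕ) (x : Fin 3) : Monotone (delta m · x) := by
  intro p q h
  fin_cases x <;> simp only [delta] <;> split_ifs <;> omega

theorem delta_sink {m : ℕ} (hm : 1 ≤ m) {q : ℕ} (hq : q = 0 ∨ q = m + 1 ∨ q = 2 * m + 2)
    (x : Fin 3) : delta m q x = q := by
  fin_cases x <;> simp only [delta] <;> split_ifs <;> omega

theorem delta_ne_of_synchronizable {m p q : ℕ} (hm : 1 ≤ m) (hp : p ≤ m + 1) (hq : m + 1 ≤ q)
    (x : Fin 3) (hsync : ∃ w : List (Fin 3),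
      w.foldl (delta m) (delta m p x) = w.foldl (delta m) (delta m q x)) :
    delta m p x ≠ 0 ∧ delta m q x ≠ 2 * m + 2 := by
  obtain ⟨w, hw⟩ := hsync
  have hp' : delta m p x ≤ m + 1 := delta_sink hm (q := m + 1) (by omega) x ▸ delta_monotone m x hp
  have hq' : m + 1 ≤ delta m q x := delta_sink hm (q := m + 1) (by omega) x ▸ delta_monotone m x hq
  have hmono := delta_monotone m
  constructor <;> intro h
  · exact (foldl_lt_foldl_of_le_sink_lt_sink hmono (delta_sink hm (.inl rfl))
      (delta_sink hm (.inr (.inl rfl))) h.le (by omega) hq' w).ne hw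
  · exact (foldl_lt_foldl_of_le_sink_lt_sink hmono (delta_sink hm (.inr (.inl rfl)))
      (delta_sink hm (.inr (.inr rfl))) hp' (by omega) h.ge w).ne hw

theorem potential_step {m p q : ℕ} (hpq : LivePair m p q) (x : Fin 3) (hp : delta m p x ≠ 0)
    (hq : delta m q x ≠ 2 * m + 2) :
    LivePair m (delta m p x) (delta m q x) ∧
      potential m p q ≤ potential m (delta m p x) (delta m q x) + 1 := by
  obtain ⟨hp1, hp2, hq1, hq2⟩ := hpq
  -- the two instances of the quadratic term that `omega` needs to see through
  have hforward : p ≤ m → (m + 1 - p) * m = (m + 1 - (p + 1)) * m + m := fun hp => by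
    rw [← Nat.succ_mul]; congr 1; omega
  have hend : p = m + 1 → (m + 1 - p) * m = 0 := by rintro rfl; simp
  fin_cases x <;> simp only [delta, potential, LivePair] at * <;> split_ifs at * <;> omega

theorem potential_le_length {m : ℕ} (hm : 1 ≤ m) (w : List (Fin 3)) {p q : ℕ}
    (hpq : LivePair m p q) (hw : w.foldl (delta m) p = w.foldl (delta m) q) :
    potential m p q ≤ w.length := by
  refine potential_le_length_of_foldl_eq (delta m) (potential m) (LivePair m) ?_ ?_ w p q hpq hw
  · intro p ⟨_, hp, hp', _⟩
    simp [potential, show p = m + 1 by omega]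
  · intro p q x hpq hsync
    obtain ⟨hp, hq⟩ := delta_ne_of_synchronizable hm hpq.2.1 hpq.2.2.1 x hsync
    exact potential_step hpq x hp hq

def block (m : ℕ) : List (Fin 3) := List.replicate (m - 1) 1 ++ [0]

def syncWord (m : ℕ) : List (Fin 3) :=
  (List.replicate m (block m)).flatten ++ (List.replicate (m - 1) 1 ++ [2])

theorem syncWord_length {m : ℕ} (hm : 1 ≤ m) : (syncWord m).length = m ^ 2 + m := by
  simp only [syncWord, block, List.length_append, List.length_flatten, List.map_replicate,
    List.sum_replicate, List.length_replicate, List.length_singleton, smul_eq_mul]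
  rw [Nat.sub_add_cancel hm, sq]

theorem foldl_ones_of_le {m p : ℕ} (hp : p ≤ m + 1) (k : ℕ) :
    (List.replicate k 1).foldl (delta m) p = p := by
  rw [List.foldl_replicate_eq_iterate]
  exact Function.iterate_fixed (by simp only [delta]; split_ifs <;> omega) k

theorem foldl_ones_top {m : ℕ} (hm : 1 ≤ m) :
    (List.replicate (m - 1) 1).foldl (delta m) (2 * m + 1) = m + 2 := by
  rw [List.foldl_replicate_eq_iterate,
    Function.iterate_eq_sub_of_eq_pred (b := m + 2)
      (fun q _ _ => by simp only [delta]; split_ifs <;> omega) _ (by omega)]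
  omega

theorem foldl_block_left {m p : ℕ} (hp : 1 ≤ p) (hpm : p ≤ m) :
    (block m).foldl (delta m) p = p + 1 := by
  rw [block, List.foldl_append, foldl_ones_of_le (by omega)]
  simp only [List.foldl_cons, List.foldl_nil, delta]
  split_ifs <;> omega

theorem foldl_block_top {m : ℕ} (hm : 1 ≤ m) :
    (block m).foldl (delta m) (2 * m + 1) = 2 * m + 1 := by
  rw [block, List.foldl_append, foldl_ones_top hm]
  simp only [List.foldl_cons, List.foldl_nil, delta]
  grind

theorem foldl_syncWord_left (m : ℕ) : (syncWord m).foldl (delta m) 1 = m + 1 := by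
  rw [syncWord, List.foldl_append, List.foldl_flatten, List.foldl_replicate_eq_iterate,
    Function.iterate_eq_add_of_eq_succ (b := m + 1) (fun p hp hpm => foldl_block_left hp (by omega))
      _ (by omega),
    List.foldl_append, foldl_ones_of_le (by omega)]
  simp only [List.foldl_cons, List.foldl_nil, delta]
  split_ifs <;> omega

theorem foldl_syncWord_top {m : ℕ} (hm : 1 ≤ m) :
    (syncWord m).foldl (delta m) (2 * m + 1) = m + 1 := by
  rw [syncWord, List.foldl_append, List.foldl_flatten, List.foldl_replicate_eq_iterate,
    Function.iterate_fixed (foldl_block_top hm), List.foldl_append, foldl_ones_top hm]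
  simp only [List.foldl_cons, List.foldl_nil, delta]
  split_ifs <;> omega

def deltaFin (m : ℕ) (q : Fin (2 * m + 3)) (x : Fin 3) : Fin (2 * m + 3) :=
  ⟨delta m q x, delta_lt m q.isLt x⟩

theorem val_foldl_deltaFin (m : ℕ) (w : List (Fin 3)) (q : Fin (2 * m + 3)) :
    (w.foldl (deltaFin m) q).val = w.foldl (delta m) q.val :=
  (List.foldl_hom Fin.val fun _ _ => rfl).symm

end QuadraticSubsetSync

open QuadraticSubsetSync in
/-- For each `m ≥ 1` there is a monotonic automaton with `2m+3` states over a
three-letter alphabet and a two-element synchronizing subset `S` of its states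
whose shortest synchronizing word has length exactly `m² + m`. -/
theorem stmt7 (m : ℕ) (hm : 1 ≤ m) :
    ∃ (δ : Fin (2 * m + 3) → Fin 3 → Fin (2 * m + 3)) (a b : Fin (2 * m + 3)),
      (∀ x : Fin 3, Monotone (fun q => δ q x)) ∧ a ≠ b ∧
      (∃ w : List (Fin 3), w.foldl δ a = w.foldl δ b ∧ w.length = m ^ 2 + m) ∧
      (∀ w : List (Fin 3), w.foldl δ a = w.foldl δ b → m ^ 2 + m ≤ w.length) := by
  refine ⟨deltaFin m, ⟨1, by omega⟩, ⟨2 * m + 1, by omega⟩,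
    fun x _ _ h => delta_monotone m x h, by simp [Fin.ext_iff]; omega,
    ⟨syncWord m, ?_, syncWord_length hm⟩, fun w hw => ?_⟩
  · rw [Fin.ext_iff, val_foldl_deltaFin, val_foldl_deltaFin]
    exact (foldl_syncWord_left m).trans (foldl_syncWord_top hm).symm
  · rw [Fin.ext_iff, val_foldl_deltaFin, val_foldl_deltaFin] at hw
    have hlive : LivePair m 1 (2 * m + 1) := ⟨le_rfl, by omega, by omega, le_rfl⟩
    have hΦ : potential m 1 (2 * m + 1) = m ^ 2 + m := by
      simp only [potential, if_neg (show 2 * m + 1 ≠ m + 1 by omega)]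
      rw [show m + 1 - 1 = m by omega, show 2 * m + 1 - (m + 1) = m by omega, sq]
    exact hΦ ▸ potential_le_length hm w hlive hw
end

section
/- For each m ≥ 1 there exists a monotonic automaton with 4m+3 states over the binary alphabet {0,1} and a two-element subset S of its states such that S is synchronizing and every word synchronizing S has length at least m²; moreover S is synchronized by a word of length m² + 2m. -/
/-!
The states `0, …, 2m+1` and `2m+1, …, 4m+2` form two invariant chains meeting in the sink
`2m+1`, so a word synchronizing `a` (lower chain) and `b` (upper chain) must drive both into
`2m+1` while avoiding the sinks `0` and `4m+2`. Let `h = b - (2m+1)`. Each `1` lowers `h` by one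
and each `0` read while `b` is unsynchronized raises it by `m - 1`. A `1` keeps the gap `h - a`,
a `0` read before either state is synchronized lowers it by one, and the gap must be `≤ 0` when
the `0` synchronizing `a` is read, or `< 0` when `b` is synchronized first. So at least
`(h - a + 1)⁺` zeros and `h + (m - 1)(h - a + 1)⁺` ones are read: the potential
`h + m (h - a + 1)⁺` bounds the length of a synchronizing word. It equals `m² + 2m` at
`(m+1, 4m+1)`, where `(1ᵐ 0)ᵐ⁻¹ 0 1²ᵐ` attains it.
-/

theorem List.foldl_flatten_replicate {α β : Type*} (f : α → β → α) (u : List β) (k : ℕ)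
    (a : α) :
    (List.replicate k u).flatten.foldl f a = (u.foldl f ·)^[k] a := by
  induction k generalizing a with
  | zero => rfl
  | succ k ih => simp [List.replicate_succ, ih]

namespace MonotonicSync

abbrev IsSink (m q : ℕ) : Prop := q = 0 ∨ q = 2 * m + 1 ∨ q = 4 * m + 2

-- State `qᵢ` of the paper is `i - 1` here; the letter `1` is `true`, `0` is `false`.
def step (m q : ℕ) (x : Bool) : ℕ :=
  if q = 0 ∨ q = 2 * m + 1 ∨ q = 4 * m + 2 then q
  else if x then q - 1
  else if q ≤ m then q + m
  else if q ≤ 2 * m then 2 * m + 1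
  else if q ≤ 3 * m + 2 then q + m - 1
  else 4 * m + 2

variable (m : ℕ)

theorem step_monotone (x : Bool) : Monotone (step m · x) := by
  intro q r h
  cases x <;> simp only [step] <;> split_ifs <;> omega

theorem step_lt {q : ℕ} (x : Bool) (hq : q < 4 * m + 3) : step m q x < 4 * m + 3 := by
  cases x <;> simp only [step] <;> split_ifs <;> omega

theorem foldl_step_sink {q : ℕ} (hq : IsSink m q) (w : List Bool) : w.foldl (step m) q = q :=
  List.foldl_fixed' (fun _ => by unfold step; exact if_pos hq) w

theorem step_true {q : ℕ} (h1 : q ≠ 2 * m + 1) (h2 : q ≠ 4 * m + 2) :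
    step m q true = q - 1 := by
  simp only [step]; split_ifs <;> omega

theorem step_false_low {q : ℕ} (h0 : 1 ≤ q) (h1 : q ≤ m) : step m q false = q + m := by
  simp only [step, Bool.false_eq_true, if_false]; split_ifs <;> omega

theorem step_false_mid {q : ℕ} (h0 : m + 1 ≤ q) (h1 : q ≤ 2 * m) :
    step m q false = 2 * m + 1 := by
  simp only [step, Bool.false_eq_true, if_false]; split_ifs <;> omega

theorem step_false_high (hm : 1 ≤ m) {q : ℕ} (h0 : 2 * m + 2 ≤ q) (h1 : q ≤ 3 * m + 2) :
    step m q false = q + m - 1 := by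
  simp only [step, Bool.false_eq_true, if_false]; split_ifs <;> omega

theorem foldl_step_le {s q : ℕ} (hs : IsSink m s) (hq : q ≤ s) (w : List Bool) :
    w.foldl (step m) q ≤ s :=
  (foldl_step_sink m hs w).le.trans' (List.foldl_monotone (step_monotone m) w hq)

theorem le_foldl_step {s q : ℕ} (hs : IsSink m s) (hq : s ≤ q) (w : List Bool) :
    s ≤ w.foldl (step m) q :=
  (foldl_step_sink m hs w).ge.trans (List.foldl_monotone (step_monotone m) w hq)

-- `b - (2m+1)` is the height `h` of `b`; the truncated subtraction gives `(h - a + 1)⁺`.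
def potential (a b : ℕ) : ℕ :=
  b - (2 * m + 1) + m * (b - (2 * m + 1) + 1 - a)

theorem potential_le_potential_step {a b : ℕ} (x : Bool) (hxa : 1 ≤ step m a x)
    (hxb : step m b x ≤ 4 * m + 1) :
    potential m a b ≤ potential m (step m a x) (step m b x) + 1 := by
  -- `h` is the height of `b` and `g = (h - a + 1)⁺`; a `1` falls under the first alternative,
  -- a `0` under the second.
  have key : ∀ h g h' g' : ℕ,
      h ≤ h' + 1 ∧ g ≤ g' ∨ h + m ≤ h' + 1 ∧ g ≤ g' + 1 →
      h + m * g ≤ h' + m * g' + 1 := by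
    rintro h g h' g' (⟨hh, hg⟩ | ⟨hh, hg⟩) <;> nlinarith
  apply key
  cases x <;> simp only [step] at * <;> split_ifs at * <;> omega

theorem potential_le_length (w : List Bool) {a b : ℕ} (ha : a ≤ 2 * m + 1) (hb : 2 * m + 1 ≤ b)
    (hw : w.foldl (step m) a = w.foldl (step m) b) :
    potential m a b ≤ w.length := by
  induction w generalizing a b with
  | nil =>
    obtain rfl : a = b := hw
    obtain rfl : a = 2 * m + 1 := by omega
    simp [potential]
  | cons x w ih =>
    simp only [List.foldl_cons] at hw
    have hmid : IsSink m (2 * m + 1) := Or.inr (Or.inl rfl)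
    have hax : step m a x ≤ 2 * m + 1 := foldl_step_le m hmid ha [x]
    have hbx : 2 * m + 1 ≤ step m b x := le_foldl_step m hmid hb [x]
    have hax_pos : 1 ≤ step m a x := by
      by_contra! h
      have := foldl_step_le m (q := step m a x) (Or.inl rfl) (by omega) w
      have := le_foldl_step m hmid hbx w
      omega
    have hbx_lt : step m b x ≤ 4 * m + 1 := by
      by_contra! h
      have := le_foldl_step m (s := 4 * m + 2) (Or.inr (Or.inr rfl)) h w
      have := foldl_step_le m hmid hax w
      omega
    have := ih hax hbx hw
    have := potential_le_potential_step m x hax_pos hbx_lt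
    simp only [List.length_cons]
    omega

theorem foldl_replicate_true {k q : ℕ} (hk : k ≤ q)
    (hq : q ≤ 2 * m ∨ 2 * m + 1 + k ≤ q ∧ q ≤ 4 * m + 1) :
    (List.replicate k true).foldl (step m) q = q - k := by
  induction k generalizing q with
  | zero => rfl
  | succ k ih =>
    rw [List.replicate_succ, List.foldl_cons, step_true m (by omega) (by omega),
      ih (by omega) (by omega)]
    omega

def cycle : List Bool := List.replicate m true ++ [false]

theorem foldl_cycle_mid (hm : 1 ≤ m) : (cycle m).foldl (step m) (m + 1) = m + 1 := by
  rw [cycle, List.foldl_append, foldl_replicate_true m (by omega) (by omega), List.foldl_cons,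
    List.foldl_nil, Nat.add_sub_cancel_left, step_false_low m le_rfl hm, Nat.add_comm]

theorem foldl_cycle_high {q : ℕ} (hq : 3 * m + 2 ≤ q) (hq' : q ≤ 4 * m + 1) :
    (cycle m).foldl (step m) q = q - 1 := by
  rw [cycle, List.foldl_append, foldl_replicate_true m (by omega) (by omega), List.foldl_cons,
    List.foldl_nil, step_false_high m (by omega) (by omega) (by omega)]
  omega

theorem iterate_foldl_cycle_high {k q : ℕ} (hk : 3 * m + 2 + k ≤ q + 1) (hq : q ≤ 4 * m + 1) :
    ((cycle m).foldl (step m) ·)^[k] q = q - k := by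
  induction k with
  | zero => rfl
  | succ k ih =>
    rw [Function.iterate_succ_apply', ih (by omega), foldl_cycle_high m (by omega) (by omega)]
    omega

def syncWord : List Bool :=
  (List.replicate (m - 1) (cycle m)).flatten ++ false :: List.replicate (2 * m) true

theorem syncWord_length (hm : 1 ≤ m) : (syncWord m).length = m ^ 2 + 2 * m := by
  obtain ⟨k, rfl⟩ : ∃ k, m = k + 1 := ⟨m - 1, by omega⟩
  simp [syncWord, cycle]
  ring

theorem foldl_syncWord_mid (hm : 1 ≤ m) : (syncWord m).foldl (step m) (m + 1) = 2 * m + 1 := by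
  rw [syncWord, List.foldl_append, List.foldl_flatten_replicate,
    Function.iterate_fixed (foldl_cycle_mid m hm), List.foldl_cons,
    step_false_mid m le_rfl (by omega), foldl_step_sink m (by omega)]

theorem foldl_syncWord_high (hm : 1 ≤ m) :
    (syncWord m).foldl (step m) (4 * m + 1) = 2 * m + 1 := by
  rw [syncWord, List.foldl_append, List.foldl_flatten_replicate,
    iterate_foldl_cycle_high m (k := m - 1) (q := 4 * m + 1) (by omega) le_rfl, List.foldl_cons,
    step_false_high m (by omega) (by omega) (by omega),
    foldl_replicate_true m (by omega) (by omega)]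
  omega

theorem le_length_of_foldl_eq {w : List Bool}
    (hw : w.foldl (step m) (m + 1) = w.foldl (step m) (4 * m + 1)) :
    m ^ 2 + 2 * m ≤ w.length := by
  have hpot : potential m (m + 1) (4 * m + 1) = m ^ 2 + 2 * m := by
    rw [potential, show 4 * m + 1 - (2 * m + 1) = 2 * m by omega,
      show 2 * m + 1 - (m + 1) = m by omega]
    ring
  exact hpot ▸ potential_le_length m w (by omega) (by omega) hw

def δ : Fin (4 * m + 3) → Bool → Fin (4 * m + 3) :=
  fun q x => ⟨step m q x, step_lt m x q.isLt⟩

theorem δ_monotone (x : Bool) : Monotone (δ m · x) :=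
  fun _ _ h => step_monotone m x h

theorem val_foldl_δ (w : List Bool) (q : Fin (4 * m + 3)) :
    (w.foldl (δ m) q).val = w.foldl (step m) q.val :=
  (List.foldl_hom Fin.val fun _ _ => rfl).symm

end MonotonicSync

/-- For each `m ≥ 1` there is a binary monotonic automaton with `4m+3` states
and a two-element subset `S` of its states such that every word synchronizing
`S` has length at least `m²`, and `S` is synchronized by a word of length
`m² + 2m`. -/
theorem stmt8 (m : ℕ) (hm : 1 ≤ m) :
    ∃ (δ : Fin (4 * m + 3) → Bool → Fin (4 * m + 3)) (a b : Fin (4 * m + 3)),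
      (∀ x : Bool, Monotone (fun q => δ q x)) ∧ a ≠ b ∧
      (∃ w : List Bool, w.foldl δ a = w.foldl δ b ∧ w.length = m ^ 2 + 2 * m) ∧
      (∀ w : List Bool, w.foldl δ a = w.foldl δ b → m ^ 2 ≤ w.length) := by
  open MonotonicSync in
  refine ⟨δ m, ⟨m + 1, by omega⟩, ⟨4 * m + 1, by omega⟩, δ_monotone m, ?_,
    ⟨syncWord m, ?_, syncWord_length m hm⟩, fun w hw => ?_⟩
  · exact Fin.ne_of_val_ne (by simp only; omega)
  · apply Fin.ext
    rw [val_foldl_δ, val_foldl_δ]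
    exact (foldl_syncWord_mid m hm).trans (foldl_syncWord_high m hm).symm
  · have hw' := congrArg Fin.val hw
    rw [val_foldl_δ, val_foldl_δ] at hw'
    exact (Nat.le_add_right _ _).trans (le_length_of_foldl_eq m hw')
end

section
/- For every k > 0 there exist k monotonic automata, each with 3 states over a common alphabet of k letters and each with one initial and one accepting state, such that some word is accepted by all k automata, but every word accepted simultaneously by all of them has length at least 2^k − 1. -/
/-!
Encode `f < s < t` as `0 < 1 < 2` in `Fin 3` and read a configuration of the automata
`A₀, …, A_{k-1}` as the binary number whose `i`-th bit is set when `A_i` is in `t`.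
If no automaton falls into the sink `f`, a letter `a_x` can only be read when all `A_i` with
`i < x` are in `t`, and it resets them to `s`: it clears the bits below `x` and sets bit `x`,
so it increases the number by at most one. Every automaton starts in `s` (the number `0`) and
must end in `t` (the number `2^k - 1`), so an accepted word has at least `2^k - 1` letters.
Conversely the word `W₀ = ε`, `W_{n+1} = W_n a_n W_n` counts from `0` to `2^k - 1`.
-/

theorem List.foldl_backward_induction {α β : Type*} {f : α → β → α} {P : α → Prop}
    (hP : ∀ a x, P (f a x) → P a) (w : List β) (a : α) (h : P (w.foldl f a)) : P a := by
  induction w generalizing a with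
  | nil => exact h
  | cons x w ih => exact hP a x (ih (f a x) h)

theorem List.potential_foldl_le_add_length {α β : Type*} {f : α → β → α} {P : α → Prop}
    (Φ : α → ℕ) (hP : ∀ a x, P (f a x) → P a)
    (hΦ : ∀ a x, P (f a x) → Φ (f a x) ≤ Φ a + 1)
    (w : List β) (a : α) (h : P (w.foldl f a)) : Φ (w.foldl f a) ≤ Φ a + w.length := by
  induction w generalizing a with
  | nil => simp
  | cons x w ih =>
    have hstep := hΦ a x (List.foldl_backward_induction hP w (f a x) h)
    have hrest := ih (f a x) h
    simp only [List.foldl_cons, List.length_cons] at hrest ⊢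
    omega

theorem Finset.sum_range_two_pow (n : ℕ) : ∑ i ∈ Finset.range n, 2 ^ i = 2 ^ n - 1 := by
  simpa using Nat.geomSum_eq le_rfl n

theorem Fin.sum_two_pow (n : ℕ) : ∑ i : Fin n, 2 ^ (i : ℕ) = 2 ^ n - 1 := by
  rw [Fin.sum_univ_eq_sum_range (2 ^ ·), Finset.sum_range_two_pow]

theorem Fin.sum_ite_lt_two_pow {n : ℕ} (x : Fin n) :
    ∑ i : Fin n, (if i < x then 2 ^ (i : ℕ) else 0) = 2 ^ (x : ℕ) - 1 := by
  simp_rw [Fin.lt_def]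
  rw [Fin.sum_univ_eq_sum_range (fun i => if i < x.val then 2 ^ i else 0), ← Finset.sum_filter]
  have hfilter : {i ∈ Finset.range n | i < x.val} = Finset.range x := by
    ext i
    simp only [Finset.mem_filter, Finset.mem_range]
    omega
  rw [hfilter, Finset.sum_range_two_pow]

namespace CounterAutomaton

variable {k : ℕ}

def advance : Fin 3 → Fin 3
  | 0 => 0
  | _ => 2

def retreat : Fin 3 → Fin 3
  | 0 => 0
  | 1 => 0
  | 2 => 1

-- Indexed from `0`: `δ i` is the paper's `δ_{i+1}` and the letter `x` is `a_{x+1}`.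
def δ (i : Fin k) (q : Fin 3) (x : Fin k) : Fin 3 :=
  if x < i then q else if x = i then advance q else retreat q

theorem monotone_δ (i x : Fin k) : Monotone (δ i · x) := by
  unfold δ
  split_ifs
  · exact monotone_id
  · decide
  · decide

@[simp]
theorem δ_zero (i x : Fin k) : δ i 0 x = 0 := by
  unfold δ
  split_ifs <;> rfl

theorem foldl_δ_of_forall_lt {i : Fin k} {w : List (Fin k)} (hw : ∀ x ∈ w, x < i) (q : Fin 3) :
    w.foldl (δ i) q = q := by
  induction w with
  | nil => rfl
  | cons x w ih =>
    rw [List.foldl_cons, δ, if_pos (hw x List.mem_cons_self)]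
    exact ih fun y hy => hw y (List.mem_cons_of_mem x hy)

def counterWord (k : ℕ) : ℕ → List (Fin k)
  | 0 => []
  | n + 1 => counterWord k n ++ (if h : n < k then [⟨n, h⟩] else []) ++ counterWord k n

theorem val_lt_of_mem_counterWord {n : ℕ} {x : Fin k} (hx : x ∈ counterWord k n) :
    (x : ℕ) < n := by
  induction n with
  | zero => simp [counterWord] at hx
  | succ n ih =>
    simp only [counterWord, List.mem_append] at hx
    rcases hx with (hx | hx) | hx
    · exact (ih hx).trans n.lt_succ_self
    · split_ifs at hx
      · simp [List.mem_singleton.mp hx]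
      · simp at hx
    · exact (ih hx).trans n.lt_succ_self

theorem foldl_counterWord {n : ℕ} (hn : n ≤ k) {i : Fin k} (hi : (i : ℕ) < n) :
    (counterWord k n).foldl (δ i) 1 = 2 := by
  induction n with
  | zero => omega
  | succ n ih =>
    have hnk : n < k := hn
    simp only [counterWord, dif_pos hnk, List.foldl_append, List.foldl_cons, List.foldl_nil]
    rcases Nat.lt_succ_iff_lt_or_eq.mp hi with hlt | hin
    · have hretreat : δ i 2 ⟨n, hnk⟩ = 1 := by
        simp [δ, Fin.lt_def, Fin.ext_iff, hlt.le, hlt.ne', retreat]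
      rw [ih hnk.le hlt, hretreat, ih hnk.le hlt]
    · have hfix : ∀ q, (counterWord k n).foldl (δ i) q = q :=
        foldl_δ_of_forall_lt fun x hx =>
          Fin.lt_def.mpr ((val_lt_of_mem_counterWord hx).trans_eq hin.symm)
      rw [hfix, hfix]
      simp [δ, advance, Fin.ext_iff, Fin.le_def, hin]

def stepAll (σ : Fin k → Fin 3) (x : Fin k) : Fin k → Fin 3 := fun i => δ i (σ i) x

theorem foldl_stepAll_apply (w : List (Fin k)) (σ : Fin k → Fin 3) (i : Fin k) :
    w.foldl stepAll σ i = w.foldl (δ i) (σ i) :=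
  (List.foldl_hom (fun τ : Fin k → Fin 3 => τ i) fun _ _ => rfl).symm

def weight (σ : Fin k → Fin 3) : ℕ := ∑ i, if σ i = 2 then 2 ^ (i : ℕ) else 0

theorem weight_stepAll_le {σ : Fin k → Fin 3} {x : Fin k} (h : ∀ i, stepAll σ x i ≠ 0) :
    weight (stepAll σ x) ≤ weight σ + 1 := by
  have hbit : ∀ i, (if stepAll σ x i = 2 then 2 ^ (i : ℕ) else 0) +
      (if i < x then 2 ^ (i : ℕ) else 0) ≤
      (if σ i = 2 then 2 ^ (i : ℕ) else 0) + (if i = x then 2 ^ (x : ℕ) else 0) := by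
    intro i
    have hi := h i
    simp only [stepAll, δ] at hi ⊢
    rcases lt_trichotomy i x with hlt | rfl | hgt
    · -- below `x`, surviving `retreat` forces `t ↦ s`
      have hσ : σ i = 2 := by
        revert hi
        simp only [if_neg hlt.not_gt, if_neg hlt.ne']
        generalize σ i = q
        decide +revert
      simp [hlt.not_gt, hlt.ne', hlt, hσ, retreat]
    · simp only [lt_irrefl, if_false, if_true, add_zero]
      split_ifs <;> simp
    · simp [hgt, hgt.not_gt]
  have hsum := Finset.sum_le_sum fun i (_ : i ∈ Finset.univ) => hbit i
  simp only [Finset.sum_add_distrib, Fin.sum_ite_lt_two_pow, Finset.sum_ite_eq',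
    Finset.mem_univ, if_true] at hsum
  have hpos : 1 ≤ 2 ^ (x : ℕ) := Nat.one_le_two_pow
  unfold weight
  omega

theorem weight_foldl_stepAll_le (w : List (Fin k)) (σ : Fin k → Fin 3)
    (h : ∀ i, w.foldl stepAll σ i ≠ 0) :
    weight (w.foldl stepAll σ) ≤ weight σ + w.length :=
  List.potential_foldl_le_add_length (f := stepAll) (P := fun τ => ∀ i, τ i ≠ 0) weight
    (fun σ x hσx i hσi => hσx i (by simp [stepAll, hσi])) (fun _ _ => weight_stepAll_le) w σ h

theorem weight_const_one : weight (fun _ : Fin k => 1) = 0 := by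
  simp [weight]

theorem weight_const_two : weight (fun _ : Fin k => 2) = 2 ^ k - 1 := by
  simp [weight, Fin.sum_two_pow]

end CounterAutomaton

theorem stmt9_general (k : ℕ) :
    ∃ (δ : Fin k → Fin 3 → Fin k → Fin 3) (init acc : Fin k → Fin 3),
      (∀ i : Fin k, ∀ x : Fin k, Monotone (fun q => δ i q x)) ∧
      (∃ w : List (Fin k), ∀ i : Fin k, w.foldl (δ i) (init i) = acc i) ∧
      (∀ w : List (Fin k), (∀ i : Fin k, w.foldl (δ i) (init i) = acc i) →
        2 ^ k - 1 ≤ w.length) := by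
  open CounterAutomaton in
  refine ⟨δ, fun _ => 1, fun _ => 2, monotone_δ, ⟨counterWord k k, fun i =>
    foldl_counterWord le_rfl i.isLt⟩, fun w hw => ?_⟩
  have hfinal : w.foldl stepAll (fun _ => 1) = fun _ => 2 := by
    funext i
    rw [foldl_stepAll_apply, hw i]
  have hweight := weight_foldl_stepAll_le w (fun _ => 1) (by simp [hfinal])
  rwa [hfinal, weight_const_one, weight_const_two, zero_add] at hweight

/-- For every `k > 0` there exist `k` monotonic automata, each with 3 states
over a common alphabet of `k` letters, with initial and accepting states, such
that some word is accepted by all of them but every common accepted word has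
length at least `2^k - 1`. -/
theorem stmt9 (k : ℕ) (hk : 0 < k) :
    ∃ (δ : Fin k → Fin 3 → Fin k → Fin 3) (init acc : Fin k → Fin 3),
      (∀ i : Fin k, ∀ x : Fin k, Monotone (fun q => δ i q x)) ∧
      (∃ w : List (Fin k), ∀ i : Fin k, w.foldl (δ i) (init i) = acc i) ∧
      (∀ w : List (Fin k), (∀ i : Fin k, w.foldl (δ i) (init i) = acc i) →
        2 ^ k - 1 ≤ w.length) :=
  stmt9_general k
end

section
/- Given a set X of n Boolean variables x₁,...,xₙ and a clause c, let A_c be the clause-gadget automaton over Σ = {0,1,r} with states {q₁,...,q_{n+1}} ∪ {q'₂,...,q'ₙ} ∪ {s,t}, initial state q₁ and accepting state t, where for 1 ≤ i ≤ n the letter x ∈ {0,1} maps q_i to q'_{i+1} (or t if i = n) if the assignment x_i = x satisfies c, and to q_{i+1} otherwise; each q'_i is mapped by 0 and 1 forward along the primed chain to t; t is fixed by all letters; and r maps every state except t to the sink s. Then for any word z₁...zₙ ∈ {0,1}ⁿ, the automaton A_c accepts z₁...zₙ r if and only if the assignment x_i = z_i satisfies the clause c. -/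
/-!
Read the letters `z₁ … zₙ` from `q₁`. As long as no literal is satisfied the run stays on the
unprimed chain, ending in `q_{n+1}`, which `r` sends to the sink `s ≠ t`. At the first position
`i` where `x_i = z_i` satisfies `c`, the run jumps to the primed chain, whose length is tuned so
that it reaches `t` exactly when the remaining letters are used up; `t` then absorbs `r`.
-/

theorem List.foldl_eq_of_forall_step_succ {σ α : Type*} (δ : σ → α → σ) (p : ℕ → σ) {i n : ℕ}
    (hp : ∀ k, i ≤ k → k < n → ∀ a, δ (p k) a = p (k + 1)) (l : List α)
    (hl : i + l.length = n) : l.foldl δ (p i) = p n := by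
  induction l generalizing i with
  | nil => simp_all
  | cons a l ih =>
    simp only [List.length_cons] at hl
    rw [List.foldl_cons, hp i le_rfl (by omega)]
    exact ih (fun k hk => hp k (by omega)) (by omega)

section ClauseGadget

variable {Q : Type*} {n : ℕ} {δ : Q → Option Bool → Q} {s t : Q} {q q' : ℕ → Q}
  {c : ℕ → Bool → Bool}

/-- `if i = n then t else q' (i + 1)` is where a satisfying letter at position `i` leads. -/
theorem clauseGadget_foldl_primed_eq
    (hq' : ∀ i, 2 ≤ i → i ≤ n → ∀ x : Bool, δ (q' i) (some x) = if i = n then t else q' (i + 1))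
    (z : ℕ → Bool) {i m : ℕ} (hi : 1 ≤ i) (him : i + m = n) :
    ((List.range' (i + 1) m).map (fun k => (some (z k) : Option Bool))).foldl δ
      (if i = n then t else q' (i + 1)) = t := by
  have hstep : ∀ k, i ≤ k → k < n → ∀ b : Bool,
      δ (if k = n then t else q' (k + 1)) (some b) = if k + 1 = n then t else q' (k + 1 + 1) := by
    intro k hik hkn b
    rw [if_neg hkn.ne, hq' (k + 1) (by omega) hkn]
  rw [List.foldl_map]
  simpa using List.foldl_eq_of_forall_step_succ (fun p k => δ p (some (z k)))
    (fun k => if k = n then t else q' (k + 1)) (fun k hik hkn _ => hstep k hik hkn _)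
    (List.range' (i + 1) m) (by simpa)

theorem clauseGadget_accepts_suffix_iff (hst : s ≠ t)
    (hq : ∀ i, 1 ≤ i → i ≤ n → ∀ x : Bool,
      δ (q i) (some x) = if c i x then (if i = n then t else q' (i + 1)) else q (i + 1))
    (hq' : ∀ i, 2 ≤ i → i ≤ n → ∀ x : Bool, δ (q' i) (some x) = if i = n then t else q' (i + 1))
    (ht : ∀ x : Option Bool, δ t x = t)
    (hrq : ∀ i, 1 ≤ i → i ≤ n + 1 → δ (q i) none = s)
    (z : ℕ → Bool) (m : ℕ) {j : ℕ} (hj : 1 ≤ j) (hjm : j + m = n + 1) :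
    (((List.range' j m).map (fun k => (some (z k) : Option Bool))) ++ [none]).foldl δ (q j) = t
      ↔ ∃ i, j ≤ i ∧ i ≤ n ∧ c i (z i) = true := by
  induction m generalizing j with
  | zero =>
    obtain rfl : j = n + 1 := hjm
    simp only [List.range'_zero, List.map_nil, List.nil_append, List.foldl_cons, List.foldl_nil,
      hrq (n + 1) hj le_rfl, hst, false_iff]
    omega
  | succ m ih =>
    rw [List.range'_succ, List.map_cons, List.cons_append, List.foldl_cons,
      hq j hj (by omega)]
    by_cases hc : c j (z j) = true
    · rw [if_pos hc, List.foldl_append, clauseGadget_foldl_primed_eq hq' z hj (by omega)]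
      simp only [List.foldl_cons, List.foldl_nil, ht, true_iff]
      exact ⟨j, le_rfl, by omega, hc⟩
    · rw [if_neg hc, ih (by omega) (by omega)]
      refine ⟨fun ⟨i, hji, hin, hci⟩ => ⟨i, by omega, hin, hci⟩, fun ⟨i, hji, hin, hci⟩ => ?_⟩
      obtain rfl | hji := hji.eq_or_lt
      · exact absurd hci hc
      · exact ⟨i, hji, hin, hci⟩

end ClauseGadget

/-- Letters `some x` encode `x ∈ {0,1}` and `none` encodes `r`; `c i x` records whether the
assignment `x_i = x` satisfies the clause. -/
theorem stmt12_general {Q : Type*} (n : ℕ)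
    (δ : Q → Option Bool → Q) (s t : Q) (q q' : ℕ → Q)
    (c : ℕ → Bool → Bool)
    (hst : s ≠ t)
    (hq : ∀ i, 1 ≤ i → i ≤ n → ∀ x : Bool,
      δ (q i) (some x) = if c i x then (if i = n then t else q' (i + 1)) else q (i + 1))
    (hq' : ∀ i, 2 ≤ i → i ≤ n → ∀ x : Bool,
      δ (q' i) (some x) = if i = n then t else q' (i + 1))
    (ht : ∀ x : Option Bool, δ t x = t)
    (hrq : ∀ i, 1 ≤ i → i ≤ n + 1 → δ (q i) none = s)
    (z : ℕ → Bool) :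
    (((List.range n).map (fun i => (some (z (i + 1)) : Option Bool))) ++
        [(none : Option Bool)]).foldl δ (q 1) = t ↔
      ∃ i, 1 ≤ i ∧ i ≤ n ∧ c i (z i) = true := by
  have hword : (List.range n).map (fun i => (some (z (i + 1)) : Option Bool)) =
      (List.range' 1 n).map (fun k => (some (z k) : Option Bool)) := by
    simp [List.range'_eq_map_range, Nat.add_comm]
  rw [hword]
  exact clauseGadget_accepts_suffix_iff hst hq hq' ht hrq z n le_rfl (Nat.add_comm 1 n)

/-- Correctness of the clause gadget: the gadget automaton `A_c` (letters
`some x` for `x ∈ {0,1}` and `none` for `r`; `c i x` tells whether the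
assignment `x_i = x` satisfies the clause) accepts `z₁…zₙ r` from `q₁`
(i.e. the run ends in the accepting state `t`) iff the assignment
`x_i = z_i` satisfies the clause. -/
theorem stmt12 {Q : Type*} (n : ℕ) (hn : 1 ≤ n)
    (δ : Q → Option Bool → Q) (s t : Q) (q q' : ℕ → Q)
    (c : ℕ → Bool → Bool)
    (hst : s ≠ t)
    (hq : ∀ i, 1 ≤ i → i ≤ n → ∀ x : Bool,
      δ (q i) (some x) = if c i x then (if i = n then t else q' (i + 1)) else q (i + 1))
    (hq' : ∀ i, 2 ≤ i → i ≤ n → ∀ x : Bool,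
      δ (q' i) (some x) = if i = n then t else q' (i + 1))
    (ht : ∀ x : Option Bool, δ t x = t)
    (hs : ∀ x : Option Bool, δ s x = s)
    (hrq : ∀ i, 1 ≤ i → i ≤ n + 1 → δ (q i) none = s)
    (hrq' : ∀ i, 2 ≤ i → i ≤ n → δ (q' i) none = s)
    (z : ℕ → Bool) :
    (((List.range n).map (fun i => (some (z (i + 1)) : Option Bool))) ++
        [(none : Option Bool)]).foldl δ (q 1) = t ↔
      ∃ i, 1 ≤ i ∧ i ≤ n ∧ c i (z i) = true :=
  stmt12_general n δ s t q q' c hst hq hq' ht hrq z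
end

section
/- The clause-gadget automaton A_c (over alphabet {0,1,r}, with states s, q₁, q₂, q'₂, q₃, q'₃, ..., qₙ, q'ₙ, q_{n+1}, t, transitions as in the construction) is monotonic: all its transitions preserve the linear order s < q₁ < q₂ < q'₂ < q₃ < q'₃ < ... < qₙ < q'ₙ < q_{n+1} < t. It is also weakly acyclic. -/
/-!
The rank `ρ` arranges the states in layers: `s` at the bottom, then layer `i` made of `q_i` and
`q'_i`, and finally `t` on top. A letter `0` or `1` moves every state of layer `i` into layer
`i + 1`, sending `q'_i` to the top `q'_{i+1}` of that layer (and anything past layer `n` to `t`), so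
it preserves the order; the letter `r` sends everything except the top state `t` to the bottom
state `s`. For weak acyclicity, move the sink `s` to the top of the order: every other transition
is non-decreasing in rank.
-/

open Set

section

variable {Q : Type*}

structure IsClauseGadget (n : ℕ) (δ : Q → Option Bool → Q) (s t : Q) (q q' : ℕ → Q)
    (c : ℕ → Bool → Bool) : Prop where
  step_q : ∀ i, 1 ≤ i → i ≤ n → ∀ x : Bool,
    δ (q i) (some x) = if c i x then (if i = n then t else q' (i + 1)) else q (i + 1)
  step_q_last : ∀ x : Bool, δ (q (n + 1)) (some x) = t
  step_q' : ∀ i, 2 ≤ i → i ≤ n → ∀ x : Bool,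
    δ (q' i) (some x) = if i = n then t else q' (i + 1)
  step_t : ∀ x, δ t x = t
  step_s : ∀ x, δ s x = s
  reset_q : ∀ i, 1 ≤ i → i ≤ n + 1 → δ (q i) none = s
  reset_q' : ∀ i, 2 ≤ i → i ≤ n → δ (q' i) none = s

structure IsGadgetRank (n : ℕ) (s t : Q) (q q' : ℕ → Q) (ρ : Q → ℕ) : Prop where
  rank_s : ρ s = 0
  rank_q_one : ρ (q 1) = 1
  rank_q : ∀ i, 2 ≤ i → i ≤ n + 1 → ρ (q i) = 2 * i - 2
  rank_q' : ∀ i, 2 ≤ i → i ≤ n → ρ (q' i) = 2 * i - 1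
  rank_t : ρ t = 2 * n + 1

def gadgetStates (n : ℕ) (s t : Q) (q q' : ℕ → Q) : Set Q :=
  {s, t} ∪ {p | ∃ i, 1 ≤ i ∧ i ≤ n + 1 ∧ p = q i} ∪ {p | ∃ i, 2 ≤ i ∧ i ≤ n ∧ p = q' i}

theorem forall_mem_gadgetStates {n : ℕ} {s t : Q} {q q' : ℕ → Q} {P : Q → Prop} :
    (∀ a ∈ gadgetStates n s t q q', P a) ↔
      P s ∧ P t ∧ (∀ i, 1 ≤ i → i ≤ n + 1 → P (q i)) ∧ (∀ i, 2 ≤ i → i ≤ n → P (q' i)) := by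
  simp only [gadgetStates, mem_union, mem_insert_iff, mem_singleton_iff, mem_ofPred_eq, or_imp,
    forall_and, forall_eq, and_assoc]
  grind

def gadgetUnrank (n : ℕ) (s t : Q) (q q' : ℕ → Q) (r : ℕ) : Q :=
  if r = 0 then s else if r = 1 then q 1 else if r = 2 * n + 1 then t
  else if Even r then q (r / 2 + 1) else q' ((r + 1) / 2)

/- Letters `0, 1` move a state of rank `r ≥ 1` into the next layer `{q_{i+1}, q'_{i+1}}`, of ranks
`2 (r / 2) + 2` and `2 (r / 2) + 3`, and `q'_i` to the top `q'_{i+1}` of it; ranks are capped at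
`ρ t = 2 n + 1`. -/
def letterRankLo (n r : ℕ) : ℕ := if r ≤ 1 then 2 * r else min (r + 2) (2 * n + 1)

def letterRankHi (n r : ℕ) : ℕ := if r = 0 then 0 else min (2 * (r / 2) + 3) (2 * n + 1)

def resetRank (n r : ℕ) : ℕ := if 2 * n + 1 ≤ r then 2 * n + 1 else 0

theorem letterRankHi_le_letterRankLo {n r r' : ℕ} (h : r < r') :
    letterRankHi n r ≤ letterRankLo n r' := by
  unfold letterRankHi letterRankLo
  grind

theorem resetRank_mono (n : ℕ) : Monotone (resetRank n) := by
  intro r r' h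
  unfold resetRank
  grind

def acyclicRank (n r : ℕ) : ℕ := if r = 0 then 2 * n + 2 else r

theorem injOn_acyclicRank (n : ℕ) : InjOn (acyclicRank n) (Iic (2 * n + 1)) := by
  intro r hr r' hr' h
  simp only [acyclicRank, mem_Iic] at *
  grind

theorem rank_le_rank_of_bounds {S : Set Q} {ρ : Q → ℕ} {f : Q → Q} {lo hi : ℕ → ℕ}
    (hρ : InjOn ρ S) (hf : ∀ a ∈ S, lo (ρ a) ≤ ρ (f a) ∧ ρ (f a) ≤ hi (ρ a))
    (hsep : ∀ r r', r < r' → hi r ≤ lo r') {a b : Q} (ha : a ∈ S) (hb : b ∈ S)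
    (hab : ρ a ≤ ρ b) : ρ (f a) ≤ ρ (f b) := by
  rcases hab.eq_or_lt with h | h
  · rw [hρ ha hb h]
  · exact ((hf a ha).2.trans (hsep _ _ h)).trans (hf b hb).1

namespace IsGadgetRank

variable {n : ℕ} {s t : Q} {q q' : ℕ → Q} {ρ : Q → ℕ}

theorem rank_q_of_pos (hρ : IsGadgetRank n s t q q' ρ) {i : ℕ} (hi₁ : 1 ≤ i) (hi₂ : i ≤ n + 1) :
    ρ (q i) = if i = 1 then 1 else 2 * i - 2 := by
  split_ifs with hi
  · exact hi ▸ hρ.rank_q_one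
  · exact hρ.rank_q i (by omega) hi₂

theorem mapsTo (hρ : IsGadgetRank n s t q q' ρ) :
    MapsTo ρ (gadgetStates n s t q q') (Iic (2 * n + 1)) := by
  refine forall_mem_gadgetStates.2 ⟨?_, ?_, fun i hi₁ hi₂ => ?_, fun i hi₁ hi₂ => ?_⟩ <;>
    simp only [mem_Iic]
  · simp [hρ.rank_s]
  · simp [hρ.rank_t]
  · rw [hρ.rank_q_of_pos hi₁ hi₂]
    split_ifs <;> omega
  · rw [hρ.rank_q' i hi₁ hi₂]
    omega

theorem leftInvOn (hρ : IsGadgetRank n s t q q' ρ) (hn : 1 ≤ n) :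
    LeftInvOn (gadgetUnrank n s t q q') ρ (gadgetStates n s t q q') := by
  refine forall_mem_gadgetStates.2 ⟨?_, ?_, fun i hi₁ hi₂ => ?_, fun i hi₁ hi₂ => ?_⟩
  · simp [gadgetUnrank, hρ.rank_s]
  · simp [gadgetUnrank, hρ.rank_t]; omega
  · rcases hi₁.eq_or_lt with rfl | hi₁
    · simp [gadgetUnrank, hρ.rank_q_one]
    · rw [hρ.rank_q i hi₁ hi₂, gadgetUnrank, if_neg (by omega), if_neg (by omega),
        if_neg (by omega), if_pos (by grind)]
      congr 1; omega
  · rw [hρ.rank_q' i hi₁ hi₂, gadgetUnrank, if_neg (by omega), if_neg (by omega),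
      if_neg (by omega), if_neg (by grind)]
    congr 1; omega

theorem injOn (hρ : IsGadgetRank n s t q q' ρ) (hn : 1 ≤ n) :
    InjOn ρ (gadgetStates n s t q q') :=
  (hρ.leftInvOn hn).injOn

end IsGadgetRank

namespace IsClauseGadget

variable {n : ℕ} {δ : Q → Option Bool → Q} {s t : Q} {q q' : ℕ → Q} {c : ℕ → Bool → Bool}
  {ρ : Q → ℕ}

theorem rank_letter_mem_Icc (hδ : IsClauseGadget n δ s t q q' c) (hρ : IsGadgetRank n s t q q' ρ)
    (hn : 1 ≤ n) (x : Bool) : ∀ a ∈ gadgetStates n s t q q',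
      letterRankLo n (ρ a) ≤ ρ (δ a (some x)) ∧ ρ (δ a (some x)) ≤ letterRankHi n (ρ a) := by
  refine forall_mem_gadgetStates.2 ⟨?_, ?_, fun i hi₁ hi₂ => ?_, fun i hi₁ hi₂ => ?_⟩ <;>
    simp only [letterRankLo, letterRankHi]
  · simp [hδ.step_s, hρ.rank_s]
  · rw [hδ.step_t, hρ.rank_t]
    grind
  · rcases hi₂.lt_or_eq with hi₂ | rfl
    · rw [hρ.rank_q_of_pos hi₁ (by omega), hδ.step_q i hi₁ (by omega) x]
      split_ifs <;> simp (disch := omega) only [hρ.rank_t, hρ.rank_q', hρ.rank_q] <;> grind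
    · rw [hρ.rank_q_of_pos hi₁ le_rfl, hδ.step_q_last, hρ.rank_t]
      split_ifs <;> omega
  · rw [hρ.rank_q' i hi₁ hi₂, hδ.step_q' i hi₁ hi₂ x]
    split_ifs <;> simp (disch := omega) only [hρ.rank_t, hρ.rank_q'] <;> grind

theorem rank_reset (hδ : IsClauseGadget n δ s t q q' c) (hρ : IsGadgetRank n s t q q' ρ)
    (hn : 1 ≤ n) : ∀ a ∈ gadgetStates n s t q q', ρ (δ a none) = resetRank n (ρ a) := by
  refine forall_mem_gadgetStates.2 ⟨?_, ?_, fun i hi₁ hi₂ => ?_, fun i hi₁ hi₂ => ?_⟩ <;>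
    simp only [resetRank]
  · simp [hδ.step_s, hρ.rank_s]
  · simp [hδ.step_t, hρ.rank_t]
  · rw [hρ.rank_q_of_pos hi₁ hi₂, hδ.reset_q i hi₁ hi₂, hρ.rank_s]
    split_ifs <;> omega
  · rw [hρ.rank_q' i hi₁ hi₂, hδ.reset_q' i hi₁ hi₂, hρ.rank_s]
    split_ifs <;> omega

theorem rank_step_le_rank_step (hδ : IsClauseGadget n δ s t q q' c)
    (hρ : IsGadgetRank n s t q q' ρ) (hn : 1 ≤ n) (x : Option Bool) {a b : Q}
    (ha : a ∈ gadgetStates n s t q q') (hb : b ∈ gadgetStates n s t q q') (hab : ρ a ≤ ρ b) :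
    ρ (δ a x) ≤ ρ (δ b x) := by
  cases x with
  | none =>
    refine rank_le_rank_of_bounds (f := (δ · none)) (hρ.injOn hn) (fun a ha => ?_)
      (fun _ _ h => resetRank_mono n h.le) ha hb hab
    rw [hδ.rank_reset hρ hn a ha]
    exact ⟨le_rfl, le_rfl⟩
  | some x =>
    exact rank_le_rank_of_bounds (hρ.injOn hn) (hδ.rank_letter_mem_Icc hρ hn x)
      (fun _ _ => letterRankHi_le_letterRankLo) ha hb hab

theorem acyclicRank_le_acyclicRank_step (hδ : IsClauseGadget n δ s t q q' c)
    (hρ : IsGadgetRank n s t q q' ρ) (hn : 1 ≤ n) {a : Q} (ha : a ∈ gadgetStates n s t q q')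
    (x : Option Bool) : acyclicRank n (ρ a) ≤ acyclicRank n (ρ (δ a x)) := by
  have hle : ρ a ≤ 2 * n + 1 := hρ.mapsTo ha
  cases x with
  | none =>
    rw [hδ.rank_reset hρ hn a ha]
    unfold acyclicRank resetRank
    grind
  | some x =>
    have := hδ.rank_letter_mem_Icc hρ hn x a ha
    unfold acyclicRank letterRankLo letterRankHi at *
    grind

end IsClauseGadget

end

/-- The clause gadget automaton is monotonic: all its transitions preserve the
linear order `s < q₁ < q₂ < q'₂ < q₃ < q'₃ < … < qₙ < q'ₙ < q_{n+1} < t`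
(encoded by the rank function `ρ`), and it is weakly acyclic (some injective
ranking of its states is non-decreasing along every transition). -/
theorem stmt13 {Q : Type*} (n : ℕ) (hn : 1 ≤ n)
    (δ : Q → Option Bool → Q) (s t : Q) (q q' : ℕ → Q)
    (c : ℕ → Bool → Bool)
    (ρ : Q → ℕ)
    (hρs : ρ s = 0) (hρq1 : ρ (q 1) = 1)
    (hρq : ∀ i, 2 ≤ i → i ≤ n + 1 → ρ (q i) = 2 * i - 2)
    (hρq' : ∀ i, 2 ≤ i → i ≤ n → ρ (q' i) = 2 * i - 1)
    (hρt : ρ t = 2 * n + 1)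
    (hq : ∀ i, 1 ≤ i → i ≤ n → ∀ x : Bool,
      δ (q i) (some x) = if c i x then (if i = n then t else q' (i + 1)) else q (i + 1))
    (hqlast : ∀ x : Bool, δ (q (n + 1)) (some x) = t)
    (hq' : ∀ i, 2 ≤ i → i ≤ n → ∀ x : Bool,
      δ (q' i) (some x) = if i = n then t else q' (i + 1))
    (ht : ∀ x : Option Bool, δ t x = t)
    (hs : ∀ x : Option Bool, δ s x = s)
    (hrq : ∀ i, 1 ≤ i → i ≤ n + 1 → δ (q i) none = s)
    (hrq' : ∀ i, 2 ≤ i → i ≤ n → δ (q' i) none = s) :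
    (∀ x : Option Bool,
      ∀ a ∈ ({s, t} ∪ {p | ∃ i, 1 ≤ i ∧ i ≤ n + 1 ∧ p = q i} ∪
        {p | ∃ i, 2 ≤ i ∧ i ≤ n ∧ p = q' i} : Set Q),
      ∀ b ∈ ({s, t} ∪ {p | ∃ i, 1 ≤ i ∧ i ≤ n + 1 ∧ p = q i} ∪
        {p | ∃ i, 2 ≤ i ∧ i ≤ n ∧ p = q' i} : Set Q),
      ρ a ≤ ρ b → ρ (δ a x) ≤ ρ (δ b x)) ∧
    (∃ σ : Q → ℕ,
      Set.InjOn σ ({s, t} ∪ {p | ∃ i, 1 ≤ i ∧ i ≤ n + 1 ∧ p = q i} ∪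
        {p | ∃ i, 2 ≤ i ∧ i ≤ n ∧ p = q' i} : Set Q) ∧
      ∀ a ∈ ({s, t} ∪ {p | ∃ i, 1 ≤ i ∧ i ≤ n + 1 ∧ p = q i} ∪
        {p | ∃ i, 2 ≤ i ∧ i ≤ n ∧ p = q' i} : Set Q),
      ∀ x : Option Bool, σ a ≤ σ (δ a x)) := by
  have hδ : IsClauseGadget n δ s t q q' c := ⟨hq, hqlast, hq', ht, hs, hrq, hrq'⟩
  have hρ : IsGadgetRank n s t q q' ρ := ⟨hρs, hρq1, hρq, hρq', hρt⟩
  exact ⟨fun x a ha b hb => hδ.rank_step_le_rank_step hρ hn x ha hb,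
    acyclicRank n ∘ ρ, (injOn_acyclicRank n).comp (hρ.injOn hn) hρ.mapsTo,
    fun a ha => hδ.acyclicRank_le_acyclicRank_step hρ hn ha⟩
end

section
/- Let G = (V, E) be a strongly connected digraph in which every vertex has out-degree k, and let ℓ be the greatest common divisor of the lengths of all cycles of G, with the corresponding unique partition V = V₁ ∪ ... ∪ V_ℓ such that every arc goes from V_i to V_{i+1} (indices mod ℓ). Then for a subset S ⊆ V there exists a coloring of the arcs of G with k letters (each vertex's out-arcs receiving distinct letters) such that S is a synchronizing set in the resulting deterministic automaton if and only if S ⊆ V_i for some i. -/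
/-!
A word of length `m` maps `V_i` into `V_{i+m}`, so a synchronized set lies in one class.
Conversely, call two states stable if after every word they can still be merged; stability is a
congruence.

The heart is Trahtman's lemma: if two distinct vertices share an out-neighbour, some coloring has
a stable pair of distinct states. Choose a spanning subgraph of out-degree one with as many
cyclic vertices as possible and, among those, with trees as high as possible. Redirecting single
arcs of it shows that either all vertices of maximal level `L ≥ 1` lie in one tree, or two
distinct vertices send all their arcs to one vertex (and are then stable for every coloring). In
the first case, color the subgraph by one letter `a` and push a maximum set of pairwise
unmergeable states into the top of the tree: after `a^(L-1)` all its states but one are cyclic,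
so `a^(n!)` moves only that state, which must form a stable pair with its image, as otherwise
the set could be enlarged.

Quotienting by stable pairs gives a smaller graph with the same period and partition; coloring
it by induction and lifting makes all states of each `V_i` pairwise stable, and a finite set of
pairwise stable states is synchronized by merging its states one at a time. The induction stops
when no two vertices share an out-neighbour: the graph is then a single cycle, whose length
divides `ℓ`, so every `V_i` is a single vertex.
-/

open Function

namespace RoadColoring

section Automaton

variable {V α : Type*} (δ : V → α → V)

def IsStronglyConnected : Prop := ∀ u v : V, ∃ w : List α, w.foldl δ u = v

def Mergeable (p q : V) : Prop := ∃ w : List α, w.foldl δ p = w.foldl δ q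

def StablePair (p q : V) : Prop := ∀ u : List α, Mergeable δ (u.foldl δ p) (u.foldl δ q)

variable {δ} {p q r : V}

theorem Mergeable.of_eq (h : p = q) : Mergeable δ p q := ⟨[], by rw [h]⟩

theorem Mergeable.symm (h : Mergeable δ p q) : Mergeable δ q p :=
  let ⟨w, hw⟩ := h; ⟨w, hw.symm⟩

theorem Mergeable.of_foldl {u : List α} (h : Mergeable δ (u.foldl δ p) (u.foldl δ q)) :
    Mergeable δ p q :=
  let ⟨w, hw⟩ := h; ⟨u ++ w, by simpa only [List.foldl_append] using hw⟩

theorem StablePair.refl (p : V) : StablePair δ p p := fun _ => .of_eq rfl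

theorem StablePair.symm (h : StablePair δ p q) : StablePair δ q p := fun u => (h u).symm

theorem StablePair.mergeable (h : StablePair δ p q) : Mergeable δ p q := h []

theorem StablePair.foldl (h : StablePair δ p q) (u : List α) :
    StablePair δ (u.foldl δ p) (u.foldl δ q) := fun u' => by
  simpa only [List.foldl_append] using h (u ++ u')

theorem StablePair.trans (h₁ : StablePair δ p q) (h₂ : StablePair δ q r) : StablePair δ p r := by
  intro u
  obtain ⟨w₁, hw₁⟩ := h₁ u
  obtain ⟨w₂, hw₂⟩ := h₂ (u ++ w₁)
  refine ⟨w₁ ++ w₂, ?_⟩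
  simp only [List.foldl_append] at hw₂ ⊢
  rw [hw₁, hw₂]

variable (δ) in
def stableSetoid : Setoid V := ⟨StablePair δ, ⟨.refl, .symm, .trans⟩⟩

theorem stablePair_of_forall_eq [Nonempty α] {b₁ b₂ : V} (h₁ : ∀ a, δ b₁ a = r)
    (h₂ : ∀ a, δ b₂ a = r) : StablePair δ b₁ b₂ := by
  obtain ⟨a⟩ := ‹Nonempty α›
  rintro (_ | ⟨x, u⟩)
  · exact ⟨[a], by simp [h₁, h₂]⟩
  · exact ⟨[], by simp [h₁, h₂]⟩

theorem map_foldl_eq_add_length {M : Type*} [AddCommMonoidWithOne M] {P : V → M}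
    (hP : ∀ v a, P (δ v a) = P v + 1) (w : List α) (p : V) :
    P (w.foldl δ p) = P p + w.length := by
  induction w generalizing p with
  | nil => simp
  | cons a w ih =>
    rw [List.foldl_cons, ih, hP, List.length_cons, Nat.cast_succ, add_assoc, add_comm 1]

theorem StablePair.map_eq {M : Type*} [AddCommMonoidWithOne M] [IsRightCancelAdd M]
    {P : V → M} (hP : ∀ v a, P (δ v a) = P v + 1) (h : StablePair δ p q) : P p = P q := by
  obtain ⟨w, hw⟩ := h.mergeable
  have := congrArg P hw
  rwa [map_foldl_eq_add_length hP, map_foldl_eq_add_length hP, add_left_inj] at this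

theorem IsStronglyConnected.exists_apply_eq [Nonempty α] (hsc : IsStronglyConnected δ) (v : V) :
    ∃ x a, δ x a = v := by
  obtain ⟨a⟩ := ‹Nonempty α›
  obtain ⟨w, hw⟩ := hsc (δ v a) v
  induction w using List.reverseRecOn with
  | nil => exact ⟨v, a, hw⟩
  | append_singleton w b _ => exact ⟨_, b, by simpa using hw⟩

theorem foldl_replicate {f : V → V} {a : α} (hf : ∀ v, δ v a = f v) (m : ℕ) (p : V) :
    (List.replicate m a).foldl δ p = f^[m] p := by
  induction m generalizing p with
  | zero => rfl
  | succ m ih => rw [List.replicate_succ, List.foldl_cons, ih, hf, iterate_succ_apply]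

end Automaton

section Coloring

variable {V α : Type*}

def recolor (E : V → α → V) (c : V → Equiv.Perm α) : V → α → V := fun p a => E p (c p a)

theorem exists_foldl_recolor_eq (E : V → α → V) (c : V → Equiv.Perm α) (w : List α) (p : V) :
    ∃ w' : List α, w'.length = w.length ∧ w'.foldl (recolor E c) p = w.foldl E p := by
  induction w generalizing p with
  | nil => exact ⟨[], rfl, rfl⟩
  | cons a w ih =>
    obtain ⟨w', hlen, hw'⟩ := ih (E p a)
    exact ⟨(c p).symm a :: w', by simp [hlen], by simp [recolor, hw']⟩

theorem IsStronglyConnected.recolor {E : V → α → V} (hsc : IsStronglyConnected E)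
    (c : V → Equiv.Perm α) : IsStronglyConnected (recolor E c) := fun u v => by
  obtain ⟨w, rfl⟩ := hsc u v
  obtain ⟨w', -, hw'⟩ := exists_foldl_recolor_eq E c w u
  exact ⟨w', hw'⟩

variable {δ : V → α → V} {π : V → Equiv.Perm α} {p q : V}

theorem StablePair.exists_relabel_word (hπ : ∀ a b, StablePair δ a b → π a = π b)
    (h : StablePair δ p q) (w : List α) : ∃ w' : List α,
      w'.foldl (fun v x => δ v (π v x)) p = w.foldl δ p ∧
      w'.foldl (fun v x => δ v (π v x)) q = w.foldl δ q := by
  induction w generalizing p q with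
  | nil => exact ⟨[], rfl, rfl⟩
  | cons y w ih =>
    obtain ⟨w', hp, hq⟩ := ih (h.foldl [y])
    refine ⟨(π p).symm y :: w', ?_, ?_⟩
    · simpa using hp
    · simpa [hπ p q h] using hq

theorem StablePair.foldl_relabel (hπ : ∀ a b, StablePair δ a b → π a = π b)
    (h : StablePair δ p q) (u : List α) :
    StablePair δ (u.foldl (fun v x => δ v (π v x)) p) (u.foldl (fun v x => δ v (π v x)) q) := by
  induction u generalizing p q with
  | nil => exact h
  | cons x u ih => exact ih (by simpa [hπ p q h] using h.foldl [π p x])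

theorem StablePair.relabel (hπ : ∀ a b, StablePair δ a b → π a = π b) (h : StablePair δ p q) :
    StablePair (fun v x => δ v (π v x)) p q := fun u => by
  obtain ⟨w, hw⟩ := (h.foldl_relabel hπ u).mergeable
  obtain ⟨w', hp, hq⟩ := (h.foldl_relabel hπ u).exists_relabel_word hπ w
  exact ⟨w', by rw [hp, hq, hw]⟩

end Coloring

section Level

variable {V : Type*} {f : V → V} {x y : V} {i j n : ℕ}

theorem iterate_mem_periodicPts (hx : x ∈ periodicPts f) (n : ℕ) : f^[n] x ∈ periodicPts f :=
  (bijOn_periodicPts (f := f)).mapsTo.iterate n hx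

theorem iterate_mem_periodicPts_of_le (h : f^[i] x ∈ periodicPts f) (hij : i ≤ j) :
    f^[j] x ∈ periodicPts f := by
  obtain ⟨n, rfl⟩ := Nat.exists_eq_add_of_le hij
  rw [add_comm, iterate_add_apply]
  exact iterate_mem_periodicPts h n

theorem exists_iterate_eq_of_mem_periodicPts (hy : y ∈ periodicPts f) (i : ℕ) :
    ∃ j, f^[j] (f^[i] y) = y := by
  refine ⟨minimalPeriod f y * i - i, ?_⟩
  have : i ≤ minimalPeriod f y * i :=
    Nat.le_mul_of_pos_left i (minimalPeriod_pos_of_mem_periodicPts hy)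
  rw [← iterate_add_apply, Nat.sub_add_cancel this]
  exact (isPeriodicPt_minimalPeriod f y).mul_const i

noncomputable def level (f : V → V) (x : V) : ℕ := sInf {n | f^[n] x ∈ periodicPts f}

section Finite

variable [Finite V]

theorem exists_iterate_mem_periodicPts (f : V → V) (x : V) : ∃ n, f^[n] x ∈ periodicPts f := by
  obtain ⟨i, j, hij, heq⟩ := Finite.exists_ne_map_eq_of_infinite (fun n => f^[n] x)
  wlog h : i < j generalizing i j
  · exact this j i hij.symm heq.symm (by omega)
  refine ⟨i, mk_mem_periodicPts (Nat.sub_pos_of_lt h) ?_⟩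
  change f^[j - i] (f^[i] x) = f^[i] x
  rw [← iterate_add_apply, Nat.sub_add_cancel h.le]
  exact heq.symm

theorem level_le_iff : level f x ≤ n ↔ f^[n] x ∈ periodicPts f :=
  ⟨fun h => iterate_mem_periodicPts_of_le (Nat.sInf_mem (exists_iterate_mem_periodicPts f x)) h,
    fun h => Nat.sInf_le h⟩

theorem lt_level_iff : n < level f x ↔ f^[n] x ∉ periodicPts f := by
  rw [← not_le, level_le_iff]

theorem level_eq_zero_iff : level f x = 0 ↔ x ∈ periodicPts f := by
  rw [← Nat.le_zero, level_le_iff, iterate_zero_apply]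

theorem level_iterate (n : ℕ) : level f (f^[n] x) = level f x - n := by
  apply le_antisymm
  · rw [level_le_iff, ← iterate_add_apply]
    exact level_le_iff.1 (by omega)
  · rw [tsub_le_iff_right, level_le_iff, iterate_add_apply]
    exact level_le_iff.1 le_rfl

theorem level_eq_add_level_iterate (h : f^[n] x ∉ periodicPts f) :
    level f x = n + level f (f^[n] x) := by
  have := lt_level_iff.2 h
  rw [level_iterate]
  omega

theorem level_eq_level_apply_add_one (h : x ∉ periodicPts f) :
    level f x = level f (f x) + 1 := by
  have := (lt_level_iff (n := 0)).2 h
  have := level_iterate (f := f) (x := x) 1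
  rw [iterate_one] at this
  omega

theorem iterate_injOn_Iio_level : (Set.Iio (level f x)).InjOn (f^[·] x) := by
  suffices ∀ i j, i < j → j < level f x → f^[i] x ≠ f^[j] x by
    intro i hi j hj heq
    by_contra hne
    rcases Nat.lt_or_gt_of_ne hne with h | h
    exacts [this i j h hj heq, this j i h hi heq.symm]
  intro i j hij hj heq
  refine lt_level_iff.1 (hij.trans hj) (mk_mem_periodicPts (Nat.sub_pos_of_lt hij) ?_)
  change f^[j - i] (f^[i] x) = f^[i] x
  rw [← iterate_add_apply, Nat.sub_add_cancel hij.le, heq]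

end Finite

section MaxLevel

variable [Fintype V]

noncomputable def maxLevel (f : V → V) : ℕ := Finset.univ.sup (level f)

theorem level_le_maxLevel (f : V → V) (x : V) : level f x ≤ maxLevel f :=
  Finset.le_sup (Finset.mem_univ x)

theorem exists_level_eq_maxLevel [Nonempty V] (f : V → V) : ∃ x, level f x = maxLevel f := by
  obtain ⟨x, -, hx⟩ := Finset.exists_mem_eq_sup Finset.univ Finset.univ_nonempty (level f)
  exact ⟨x, hx.symm⟩

end MaxLevel

end Level

section Update

variable {V : Type*} [DecidableEq V] {f : V → V} {x y t : V} {n : ℕ}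

theorem iterate_update_of_forall_ne (h : ∀ i < n, f^[i] y ≠ x) :
    (update f x t)^[n] y = f^[n] y := by
  induction n with
  | zero => rfl
  | succ n ih =>
    rw [iterate_succ_apply', iterate_succ_apply', ih (fun i hi => h i (by omega)),
      update_of_ne (h n (by omega))]

theorem iterate_update_of_forall_update_ne (h : ∀ i < n, (update f x t)^[i] y ≠ x) :
    (update f x t)^[n] y = f^[n] y := by
  have := iterate_update_of_forall_ne (f := update f x t) (t := f x) h
  rwa [update_idem, update_eq_self, eq_comm] at this

theorem mem_periodicPts_update_iff (h : ∀ i, f^[i] y ≠ x) :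
    y ∈ periodicPts (update f x t) ↔ y ∈ periodicPts f := by
  simp only [mem_periodicPts, IsPeriodicPt, IsFixedPt,
    iterate_update_of_forall_ne (fun i _ => h i)]

theorem level_update_of_forall_ne [Finite V] (h : ∀ i, f^[i] y ≠ x) :
    level (update f x t) y = level f y := by
  have hiter : ∀ n, f^[n] y ∈ periodicPts (update f x t) ↔ f^[n] y ∈ periodicPts f :=
    fun n => mem_periodicPts_update_iff fun i => by rw [← iterate_add_apply]; exact h _
  simp only [level, iterate_update_of_forall_ne (fun i _ => h i), hiter]

theorem periodicPts_subset_update (hx : x ∉ periodicPts f) :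
    periodicPts f ⊆ periodicPts (update f x t) := fun _ hy =>
  (mem_periodicPts_update_iff fun i hi => hx (hi ▸ iterate_mem_periodicPts hy i :)).2 hy

theorem mem_periodicPts_update_self (h : ∃ i, f^[i] t = x) :
    x ∈ periodicPts (update f x t) := by
  classical
  have htrace : (update f x t)^[Nat.find h] t = x := by
    rw [iterate_update_of_forall_ne (fun i hi => Nat.find_min h hi), Nat.find_spec h]
  refine mk_mem_periodicPts (Nat.succ_pos (Nat.find h)) ?_
  change (update f x t)^[Nat.find h + 1] x = x
  rw [iterate_succ_apply, update_self, htrace]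

theorem not_mem_periodicPts_update_self (h : ∀ i, f^[i] t ≠ x) :
    x ∉ periodicPts (update f x t) := by
  rintro ⟨_ | n, hpos, hn⟩
  · exact lt_irrefl 0 hpos
  rw [IsPeriodicPt, IsFixedPt, iterate_succ_apply, update_self,
    iterate_update_of_forall_ne fun i _ => h i] at hn
  exact h n hn

theorem ncard_periodicPts_lt_update [Finite V] (hx : x ∉ periodicPts f)
    (h : ∃ i, f^[i] t = x) : (periodicPts f).ncard < (periodicPts (update f x t)).ncard :=
  Set.ncard_lt_ncard
    ⟨periodicPts_subset_update hx, fun hs => hx (hs (mem_periodicPts_update_self h))⟩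

end Update

section TopTree

variable {V : Type*} [Fintype V] {f g : V → V}

def HasUniqueTopTree (g : V → V) : Prop :=
  0 < maxLevel g ∧ ∃ r, ∀ z, level g z = maxLevel g → g^[maxLevel g] z = r

theorem HasUniqueTopTree.of_forall_lt_level {L : ℕ} {r : V} (hex : ∃ z, L < level g z)
    (hdrain : ∀ z, L < level g z → g^[level g z] z = r) : HasUniqueTopTree g := by
  obtain ⟨z₀, hz₀⟩ := hex
  have hL : L < maxLevel g := hz₀.trans_le (level_le_maxLevel g z₀)
  refine ⟨by omega, r, fun z hz => ?_⟩
  rw [← hz]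
  exact hdrain z (by omega)

theorem hasUniqueTopTree_of_range {t : V} (ht : t ∉ Set.range f)
    (hrange : ∀ z, z ≠ t → z ∈ Set.range f) : HasUniqueTopTree f := by
  have htp : t ∉ periodicPts f := fun h => ht (periodicPts_subset_range h)
  have hmax : 0 < maxLevel f :=
    ((lt_level_iff (n := 0)).2 htp).trans_le (level_le_maxLevel f t)
  refine ⟨hmax, f^[maxLevel f] t, fun z hz => ?_⟩
  suffices z = t by rw [this]
  by_contra hne
  obtain ⟨u, rfl⟩ := hrange z hne
  have hu : u ∉ periodicPts f := fun hu => by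
    have := level_eq_zero_iff.2 (iterate_mem_periodicPts hu 1)
    rw [iterate_one] at this
    omega
  have := level_le_maxLevel f u
  rw [level_eq_level_apply_add_one hu] at this
  omega

theorem hasUniqueTopTree_update_of_forall_ne [DecidableEq V] {x v : V}
    (hmax : ∀ z, level g z ≤ level g v) (hx : ∀ i, g^[i] v ≠ x) :
    HasUniqueTopTree (update g x v) := by
  have hlx : level (update g x v) x = level g v + 1 := by
    rw [level_eq_level_apply_add_one (not_mem_periodicPts_update_self hx), update_self,
      level_update_of_forall_ne hx]
  set g' := update g x v
  have hgx : g' x = v := update_self x v g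
  refine .of_forall_lt_level (L := level g v) (r := g^[level g v] v) ⟨x, by omega⟩
    fun z hz => ?_
  by_cases hreach : ∃ i, g'^[i] z = x
  · obtain ⟨i, hi⟩ := hreach
    rw [level_eq_add_level_iterate (hi ▸ not_mem_periodicPts_update_self hx : g'^[i] z ∉ _),
      hi, hlx, add_comm, iterate_add_apply, hi, iterate_succ_apply, hgx,
      iterate_update_of_forall_ne fun i _ => hx i]
  · push Not at hreach
    have hz' : ∀ i, g^[i] z ≠ x := fun i => by
      rw [← iterate_update_of_forall_update_ne fun j _ => hreach j]
      exact hreach i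
    have := hmax z
    rw [level_update_of_forall_ne hz'] at hz
    omega

end TopTree

section CycleRedirect

variable {V : Type*}

/-- Redirecting to `v` the arc leaving `x = g^[e] r`, on the cycle (of length `N`) of the root
`r = g^[L] v` of `v`: the new cycle is `r → ⋯ → x → v → ⋯ → r`, and the old arc
`g^[e + 1] r → ⋯ → g^[N - 1] r` becomes a tree path into `r`. -/
structure CycleRedirect (g : V → V) (v r x : V) (L N e : ℕ) : Prop where
  level_pos : 0 < L
  level_eq : level g v = L
  iterate_level : g^[L] v = r
  minimalPeriod_eq : minimalPeriod g r = N
  lt_period : e < N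
  iterate_eq : g^[e] r = x

namespace CycleRedirect

variable {g : V → V} {v r x y : V} {L N e i m s : ℕ}

theorem iterate_period (h : CycleRedirect g v r x L N e) : g^[N] r = r :=
  h.minimalPeriod_eq ▸ iterate_minimalPeriod

theorem iterate_ne (h : CycleRedirect g v r x L N e) (hm : m < N) (hme : m ≠ e) :
    g^[m] r ≠ x := fun heq =>
  hme (iterate_injOn_Iio_minimalPeriod (h.minimalPeriod_eq ▸ hm :)
    (h.minimalPeriod_eq ▸ h.lt_period :) (heq.trans h.iterate_eq.symm))

theorem update_iterate_cycle [DecidableEq V] (h : CycleRedirect g v r x L N e) (hi : i ≤ e) :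
    (update g x v)^[i] r = g^[i] r :=
  iterate_update_of_forall_ne fun _ _ => h.iterate_ne (by have := h.lt_period; omega) (by omega)

theorem update_iterate_arc [DecidableEq V] (h : CycleRedirect g v r x L N e) (hm : e < m)
    (hs : m + s ≤ N) :
    (update g x v)^[s] (g^[m] r) = g^[m + s] r := by
  rw [iterate_update_of_forall_ne, ← iterate_add_apply, add_comm]
  intro i hi
  rw [← iterate_add_apply]
  exact h.iterate_ne (by omega) (by omega)

variable [Finite V]

theorem r_mem (h : CycleRedirect g v r x L N e) : r ∈ periodicPts g :=
  h.iterate_level ▸ level_le_iff.1 h.level_eq.le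

theorem tail_not_mem (h : CycleRedirect g v r x L N e) (hs : s < L) :
    g^[s] v ∉ periodicPts g :=
  lt_level_iff.1 (h.level_eq ▸ hs)

variable [DecidableEq V]

theorem update_iterate_tail (h : CycleRedirect g v r x L N e) (hs : s ≤ L) :
    (update g x v)^[s] v = g^[s] v :=
  iterate_update_of_forall_ne fun _ hi heq => h.tail_not_mem (by omega)
    (heq ▸ h.iterate_eq ▸ iterate_mem_periodicPts h.r_mem e :)

theorem update_iterate_add (h : CycleRedirect g v r x L N e) (hs : s ≤ L) :
    (update g x v)^[s + (e + 1)] r = g^[s] v := by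
  rw [iterate_add_apply, iterate_succ_apply', h.update_iterate_cycle le_rfl, h.iterate_eq,
    update_self, h.update_iterate_tail hs]

theorem r_mem_update (h : CycleRedirect g v r x L N e) : r ∈ periodicPts (update g x v) :=
  mk_mem_periodicPts (n := L + (e + 1)) (by omega) (by
    change (update g x v)^[L + (e + 1)] r = r
    rw [h.update_iterate_add le_rfl, h.iterate_level])

theorem x_mem_update (h : CycleRedirect g v r x L N e) : x ∈ periodicPts (update g x v) := by
  have := iterate_mem_periodicPts h.r_mem_update e
  rwa [h.update_iterate_cycle le_rfl, h.iterate_eq] at this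

theorem mem_periodicPts_update (h : CycleRedirect g v r x L N e) (hy : y ∈ periodicPts g)
    (hyarc : ∀ m, e < m → m < N → g^[m] r ≠ y) : y ∈ periodicPts (update g x v) := by
  by_cases hcyc : ∃ i < N, g^[i] r = y
  · obtain ⟨i, hi, rfl⟩ := hcyc
    have hie : i ≤ e := by by_contra! hie; exact hyarc i hie hi rfl
    rw [← h.update_iterate_cycle hie]
    exact iterate_mem_periodicPts h.r_mem_update i
  refine (mem_periodicPts_update_iff fun i hi => hcyc ?_).2 hy
  obtain ⟨j, hj⟩ := exists_iterate_eq_of_mem_periodicPts hy i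
  refine ⟨(j + e) % N, Nat.mod_lt _ (by have := h.lt_period; omega), ?_⟩
  rw [← h.minimalPeriod_eq, iterate_mod_minimalPeriod_eq, iterate_add_apply, h.iterate_eq, ← hi,
    hj]

theorem ncard_add_le (h : CycleRedirect g v r x L N e) :
    (periodicPts g).ncard + L ≤ (periodicPts (update g x v)).ncard + (N - 1 - e) := by
  set arc := (g^[·] r) '' Set.Ioo e N
  set tail := (g^[·] v) '' Set.Iio L
  have harc : arc.ncard ≤ N - 1 - e := by
    refine (Set.ncard_image_le (Set.finite_Ioo e N)).trans ?_
    rw [Set.ncard_Ioo_nat]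
    omega
  have htail : tail.ncard = L := by
    have hinj : (Set.Iio L).InjOn (g^[·] v) := h.level_eq ▸ iterate_injOn_Iio_level
    rw [hinj.ncard_image, Set.ncard_Iio_nat]
  have hdisj : Disjoint (periodicPts g \ arc) tail := by
    rw [Set.disjoint_right]
    rintro _ ⟨s, hs, rfl⟩ hmem
    exact h.tail_not_mem hs hmem.1
  have hsub : (periodicPts g \ arc) ∪ tail ⊆ periodicPts (update g x v) := by
    rintro y (⟨hy, hyarc⟩ | ⟨s, hs, rfl⟩)
    · exact h.mem_periodicPts_update hy fun m hm hmN heq => hyarc ⟨m, ⟨hm, hmN⟩, heq⟩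
    · change g^[s] v ∈ _
      rw [← h.update_iterate_add (le_of_lt hs)]
      exact iterate_mem_periodicPts h.r_mem_update _
  have := Set.ncard_le_ncard hsub
  rw [Set.ncard_union_eq hdisj, htail] at this
  have := Set.ncard_le_ncard_sdiff_add_ncard (periodicPts g) arc
  omega

/-- `update g x v` maps both `g^[N - 1] r` and its periodic point `g^[L - 1] v` to `r`, and it is
injective on its periodic points. -/
theorem last_not_mem_update (h : CycleRedirect g v r x L N e) (he : e + 1 < N) :
    g^[N - 1] r ∉ periodicPts (update g x v) := by
  intro hmem
  have hlast : update g x v (g^[N - 1] r) = r := by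
    have := h.update_iterate_arc (m := N - 1) (s := 1) (by omega) (by omega)
    rwa [iterate_one, Nat.sub_add_cancel (by omega), h.iterate_period] at this
  have hpred : update g x v ((update g x v)^[(L - 1) + (e + 1)] r) = r := by
    have := h.update_iterate_add le_rfl
    rwa [show L + (e + 1) = (L - 1) + (e + 1) + 1 by have := h.level_pos; omega,
      iterate_succ_apply', h.iterate_level] at this
  have heq := (bijOn_periodicPts (f := update g x v)).injOn hmem
    (iterate_mem_periodicPts h.r_mem_update _) (hlast.trans hpred.symm)
  rw [h.update_iterate_add (by omega)] at heq
  exact h.tail_not_mem (by have := h.level_pos; omega) (heq ▸ iterate_mem_periodicPts h.r_mem _)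

theorem level_update_arc (h : CycleRedirect g v r x L N e) (hm : e < m) (hmN : m < N) :
    level (update g x v) (g^[m] r) = N - m := by
  apply le_antisymm
  · rw [level_le_iff, h.update_iterate_arc hm (by omega), Nat.add_sub_cancel' hmN.le,
      h.iterate_period]
    exact h.r_mem_update
  · have := h.update_iterate_arc (s := N - m - 1) hm (by omega)
    rw [show m + (N - m - 1) = N - 1 by omega] at this
    have := lt_level_iff.2 (this ▸ h.last_not_mem_update (by omega))
    omega

end CycleRedirect

/-- A vertex `z` above level `L` follows `g` for `L` steps and lands on a vertex that is
periodic for `g` but not for `update g x v`, i.e. on the old arc, which drains into `r`. -/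
theorem CycleRedirect.hasUniqueTopTree_update [Fintype V] [DecidableEq V] {g : V → V}
    {v r x : V} {L N e : ℕ} (h : CycleRedirect g v r x L N e) (hmax : ∀ z, level g z ≤ L)
    (hlt : L < N - 1 - e) : HasUniqueTopTree (update g x v) := by
  set g' := update g x v
  refine .of_forall_lt_level (L := L) (r := r)
    ⟨g^[e + 1] r, by rw [h.level_update_arc (by omega) (by omega)]; omega⟩ fun z hz => ?_
  have hpath : g'^[L] z = g^[L] z := iterate_update_of_forall_update_ne fun i hi heq =>
    lt_level_iff.1 (by omega) (heq ▸ h.x_mem_update : g'^[i] z ∈ _)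
  have hy : g^[L] z ∉ periodicPts g' := hpath ▸ lt_level_iff.1 hz
  obtain ⟨m, hm, hmN, hmy⟩ : ∃ m, e < m ∧ m < N ∧ g^[m] r = g^[L] z := by
    by_contra! hno
    exact hy (h.mem_periodicPts_update (level_le_iff.1 (hmax z)) hno)
  rw [level_eq_add_level_iterate (hpath ▸ hy : g'^[L] z ∉ _), hpath, ← hmy,
    h.level_update_arc hm hmN, add_comm, iterate_add_apply, hpath, ← hmy,
    h.update_iterate_arc hm (by omega), Nat.add_sub_cancel' hmN.le, h.iterate_period]

end CycleRedirect

section Spanning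

variable {V α : Type*} (E : V → α → V)

def IsSpanning (g : V → V) : Prop := ∀ v, ∃ a, E v a = g v

structure IsExtremal [Fintype V] (g : V → V) : Prop where
  isSpanning : IsSpanning E g
  ncard_le : ∀ g', IsSpanning E g' → (periodicPts g').ncard ≤ (periodicPts g).ncard
  maxLevel_le : ∀ g', IsSpanning E g' → (periodicPts g').ncard = (periodicPts g).ncard →
    maxLevel g' ≤ maxLevel g

variable {E} {g : V → V}

theorem IsSpanning.update [DecidableEq V] (hg : IsSpanning E g) {x t : V} {a : α}
    (ha : E x a = t) : IsSpanning E (update g x t) := by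
  intro v
  rcases eq_or_ne v x with rfl | hvx
  · exact ⟨a, by rw [update_self, ha]⟩
  · rw [update_of_ne hvx]
    exact hg v

theorem exists_isExtremal [Fintype V] [DecidableEq V] [Nonempty α] (E : V → α → V) :
    ∃ g, IsExtremal E g := by
  classical
  obtain ⟨a⟩ := ‹Nonempty α›
  obtain ⟨g, hg, hmax⟩ := Finset.exists_max_image (Finset.univ.filter (IsSpanning E))
    (fun g => toLex ((periodicPts g).ncard, maxLevel g))
    ⟨fun v => E v a, Finset.mem_filter.2 ⟨Finset.mem_univ _, fun v => ⟨a, rfl⟩⟩⟩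
  have hle : ∀ g', IsSpanning E g' → _ := fun g' hg' =>
    Prod.Lex.toLex_le_toLex.1 (hmax g' (Finset.mem_filter.2 ⟨Finset.mem_univ _, hg'⟩))
  refine ⟨g, (Finset.mem_filter.1 hg).2, fun g' hg' => ?_, fun g' hg' heq => ?_⟩
  · rcases hle g' hg' with h | h
    exacts [h.le, h.1.le]
  · rcases hle g' hg' with h | h
    exacts [absurd heq h.ne, h.2]

theorem IsSpanning.exists_hasUniqueTopTree_of_maxLevel_eq_zero [Fintype V] [DecidableEq V]
    (hg : IsSpanning E g) (h0 : maxLevel g = 0) (hmeet : ∃ p q a b, p ≠ q ∧ E p a = E q b) :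
    ∃ g', IsSpanning E g' ∧ HasUniqueTopTree g' := by
  have hinj : Injective g := injective_iff_periodicPts_eq_univ.2 <| Set.eq_univ_of_forall
    fun x => level_eq_zero_iff.1 (Nat.le_zero.1 (h0 ▸ level_le_maxLevel g x))
  obtain ⟨p, q, a, b, hpq, hab⟩ := hmeet
  obtain ⟨x, c, hxc, hgx⟩ : ∃ x c, E x c = E p a ∧ g x ≠ E p a := by
    by_cases hp : g p = E p a
    · exact ⟨q, b, hab.symm, fun hq => hpq (hinj (hp.trans hq.symm))⟩
    · exact ⟨p, a, rfl, hp⟩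
  refine ⟨_, hg.update hxc, hasUniqueTopTree_of_range (t := g x) ?_ fun z hz => ?_⟩
  · rintro ⟨y, hy⟩
    rcases eq_or_ne y x with rfl | hyx
    · exact hgx (by rw [← hy, update_self])
    · exact hyx (hinj (by rwa [update_of_ne hyx] at hy))
  · obtain ⟨u, rfl⟩ := Finite.surjective_of_injective hinj z
    have hux : u ≠ x := by rintro rfl; exact hz rfl
    exact ⟨u, update_of_ne hux _ _⟩

section Extremal

variable [Fintype V]

theorem IsExtremal.of_ncard_eq {g' : V → V} (hg : IsExtremal E g) (hg' : IsSpanning E g')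
    (hn : (periodicPts g').ncard = (periodicPts g).ncard) (hm : maxLevel g' = maxLevel g) :
    IsExtremal E g' :=
  ⟨hg', fun g'' h => hn ▸ hg.ncard_le g'' h,
    fun g'' h h' => hm ▸ hg.maxLevel_le g'' h (h'.trans hn)⟩

variable [DecidableEq V] {v w x z : V} {a b : α}

theorem IsExtremal.iterate_ne (hg : IsExtremal E g) (hw : w ∉ periodicPts g) (hb : E w b = z)
    (i : ℕ) : g^[i] z ≠ w := fun hi =>
  (hg.ncard_le _ (hg.isSpanning.update hb)).not_gt (ncard_periodicPts_lt_update hw ⟨i, hi⟩)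

theorem IsExtremal.ncard_update_eq (hg : IsExtremal E g) (hw : w ∉ periodicPts g)
    (hb : E w b = z) : (periodicPts (update g w z)).ncard = (periodicPts g).ncard :=
  le_antisymm (hg.ncard_le _ (hg.isSpanning.update hb))
    (Set.ncard_le_ncard (periodicPts_subset_update hw))

theorem IsExtremal.exists_iterate_eq_of_apply_eq (hg : IsExtremal E g)
    (hno : ∀ g', IsSpanning E g' → ¬ HasUniqueTopTree g') (hv : level g v = maxLevel g)
    (hL : 0 < maxLevel g) (hx : E x a = v) :
    ∃ e, e + maxLevel g + 1 = minimalPeriod g (g^[maxLevel g] v) ∧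
      g^[e] (g^[maxLevel g] v) = x := by
  set L := maxLevel g
  set r := g^[L] v
  have hmax : ∀ z, level g z ≤ L := level_le_maxLevel g
  have hsp := hg.isSpanning.update (g := g) hx
  by_cases hreach : ∃ i, g^[i] v = x
  swap
  · push Not at hreach
    exact absurd (hasUniqueTopTree_update_of_forall_ne (hv ▸ hmax) hreach) (hno _ hsp)
  obtain ⟨i, rfl⟩ := hreach
  have hi : L ≤ i := by
    by_contra! hi
    exact hg.iterate_ne (lt_level_iff.1 (hv ▸ hi)) hx i rfl
  have hr : r ∈ periodicPts g := level_le_iff.1 hv.le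
  have h : CycleRedirect g v r (g^[i] v) L (minimalPeriod g r) ((i - L) % minimalPeriod g r) :=
    ⟨hL, hv, rfl, rfl, Nat.mod_lt _ (minimalPeriod_pos_of_mem_periodicPts hr), by
      rw [iterate_mod_minimalPeriod_eq, ← iterate_add_apply, Nat.sub_add_cancel hi]⟩
  have := h.ncard_add_le
  have := hg.ncard_le _ hsp
  have := h.lt_period
  rcases (show L ≤ minimalPeriod g r - 1 - (i - L) % minimalPeriod g r by omega).lt_or_eq
    with hlt | heq
  · exact absurd (h.hasUniqueTopTree_update hmax hlt) (hno _ hsp)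
  · exact ⟨_, by omega, h.iterate_eq⟩

theorem IsExtremal.iterate_succ_eq_of_apply_eq (hg : IsExtremal E g)
    (hno : ∀ g', IsSpanning E g' → ¬ HasUniqueTopTree g') (hv : level g v = maxLevel g)
    (hL : 0 < maxLevel g) (hx : E x a = v) :
    x ∈ periodicPts g ∧ g^[maxLevel g + 1] x = g^[maxLevel g] v := by
  obtain ⟨e, he, rfl⟩ := hg.exists_iterate_eq_of_apply_eq hno hv hL hx
  refine ⟨iterate_mem_periodicPts (level_le_iff.1 hv.le) e, ?_⟩
  rw [← iterate_add_apply, show maxLevel g + 1 + e = minimalPeriod g (g^[maxLevel g] v) by omega,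
    iterate_minimalPeriod]

/-- Redirecting the arc of `w = g^[L - 1] v` to `z = E w b` keeps `g` extremal with `v` on top
and root `z`; the in-neighbour `x` of `v` is sent by `L + 1` steps to both roots `z` and
`g^[L] v`. -/
theorem IsExtremal.apply_iterate_pred_eq (hg : IsExtremal E g)
    (hno : ∀ g', IsSpanning E g' → ¬ HasUniqueTopTree g') (hv : level g v = maxLevel g)
    (hL : 0 < maxLevel g) (hx : E x a = v) (b : α) :
    E (g^[maxLevel g - 1] v) b = g^[maxLevel g] v := by
  set L := maxLevel g
  set w := g^[L - 1] v
  have hw : w ∉ periodicPts g := lt_level_iff.1 (by omega)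
  have hz := hg.iterate_ne (b := b) hw rfl
  have hncard := hg.ncard_update_eq (b := b) hw rfl
  have hvw : (update g w (E w b))^[L - 1] v = w := iterate_update_of_forall_ne fun i hi heq =>
    hi.ne (iterate_injOn_Iio_level (Set.mem_Iio.2 (by omega)) (Set.mem_Iio.2 (by omega)) heq)
  have hvz : (update g w (E w b))^[L] v = E w b := by
    rw [show L = (L - 1) + 1 by omega, iterate_succ_apply', hvw, update_self]
  have hlv : level (update g w (E w b)) v = L + level g (E w b) := by
    have hw' := not_mem_periodicPts_update_self hz
    rw [level_eq_add_level_iterate (by rwa [hvw]), hvw, level_eq_level_apply_add_one hw',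
      update_self, level_update_of_forall_ne hz]
    omega
  have := hg.maxLevel_le _ (hg.isSpanning.update rfl) hncard
  have := level_le_maxLevel (update g w (E w b)) v
  have hmL : maxLevel (update g w (E w b)) = L := by omega
  have hg' := hg.of_ncard_eq (hg.isSpanning.update rfl) hncard hmL
  obtain ⟨hxper, hxr⟩ := hg.iterate_succ_eq_of_apply_eq hno hv hL hx
  have hxr'' := (hg'.iterate_succ_eq_of_apply_eq hno (by omega) (by omega) hx).2
  rw [hmL, hvz, iterate_update_of_forall_ne fun i _ hi =>
    hw (hi ▸ iterate_mem_periodicPts hxper i :), hxr] at hxr''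
  exact hxr''.symm

theorem IsExtremal.update_of_cycleRedirect {r : V} {L N e : ℕ} (hg : IsExtremal E g)
    (h : CycleRedirect g v r x L N e) (hL : maxLevel g = L) (hN : e + L + 1 = N)
    (hx : E x a = v) :
    IsExtremal E (update g x v) ∧ maxLevel (update g x v) = L ∧
      level (update g x v) (g^[e + 1] r) = L := by
  have := h.level_pos
  have hsp := hg.isSpanning.update hx
  have hncard : (periodicPts (update g x v)).ncard = (periodicPts g).ncard :=
    le_antisymm (hg.ncard_le _ hsp) (by have := h.ncard_add_le; omega)
  have hly : level (update g x v) (g^[e + 1] r) = L := by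
    rw [h.level_update_arc (by omega) (by omega)]
    omega
  have hmax : maxLevel (update g x v) = L :=
    le_antisymm (hL ▸ hg.maxLevel_le _ hsp hncard) (hly ▸ level_le_maxLevel _ _)
  exact ⟨hg.of_ncard_eq hsp hncard (hmax.trans hL.symm), hmax, hly⟩

end Extremal

/-- The vertices `b₁ = g^[L - 1] v` and `b₂ = g^[N - 1] r` come from an extremal `g` and from
`g` with the arc of the in-neighbour of `v` redirected to `v`. -/
theorem exists_hasUniqueTopTree_or_bunches [Fintype V] [DecidableEq V] [Nonempty α]
    (hsc : IsStronglyConnected E) (hmeet : ∃ p q a b, p ≠ q ∧ E p a = E q b) :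
    (∃ g, IsSpanning E g ∧ HasUniqueTopTree g) ∨
      ∃ b₁ b₂ r, b₁ ≠ b₂ ∧ (∀ a, E b₁ a = r) ∧ ∀ a, E b₂ a = r := by
  refine or_iff_not_imp_left.2 fun hno => ?_
  push Not at hno
  have : Nonempty V := let ⟨p, _⟩ := hmeet; ⟨p⟩
  obtain ⟨g, hg⟩ := exists_isExtremal E
  rcases Nat.eq_zero_or_pos (maxLevel g) with h0 | hL
  · obtain ⟨g', hg', htop⟩ := hg.isSpanning.exists_hasUniqueTopTree_of_maxLevel_eq_zero h0 hmeet
    exact absurd htop (hno g' hg')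
  obtain ⟨v, hv⟩ := exists_level_eq_maxLevel g
  obtain ⟨x, a, hx⟩ := hsc.exists_apply_eq v
  obtain ⟨e, he, rfl⟩ := hg.exists_iterate_eq_of_apply_eq hno hv hL hx
  set L := maxLevel g
  set r := g^[L] v
  obtain ⟨N, hN⟩ : ∃ N, minimalPeriod g r = N := ⟨_, rfl⟩
  rw [hN] at he
  have h : CycleRedirect g v r (g^[e] r) L N e := ⟨hL, hv, rfl, hN, by omega, rfl⟩
  obtain ⟨hg', hmax, hly⟩ := hg.update_of_cycleRedirect h rfl he hx
  obtain ⟨a₁, ha₁⟩ := hg.isSpanning (g^[e] r)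
  rw [← iterate_succ_apply' g] at ha₁
  have hb₂ := hg'.apply_iterate_pred_eq hno (hly.trans hmax.symm) (hmax ▸ hL) ha₁
  rw [hmax, h.update_iterate_arc (by omega) (by omega), h.update_iterate_arc (by omega) (by omega),
    show e + 1 + (L - 1) = N - 1 by omega, show e + 1 + L = N by omega, h.iterate_period] at hb₂
  exact ⟨g^[L - 1] v, g^[N - 1] r, r,
    fun heq => h.tail_not_mem (by omega) (heq ▸ iterate_mem_periodicPts h.r_mem _),
    hg.apply_iterate_pred_eq hno hv hL hx, hb₂⟩

end Spanning

section FClique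

variable {V α : Type*} [DecidableEq V] {δ : V → α → V}

variable (δ) in
def IsFClique (A : Finset V) : Prop := (A : Set V).Pairwise fun p q => ¬ Mergeable δ p q

variable (δ) in
def IsMaxFClique (A : Finset V) : Prop := IsFClique δ A ∧ ∀ B, IsFClique δ B → B.card ≤ A.card

theorem IsFClique.image_foldl {A : Finset V} (hA : IsFClique δ A) (u : List α) :
    IsFClique δ (A.image fun p => u.foldl δ p) ∧
      (A.image fun p => u.foldl δ p).card = A.card := by
  refine ⟨?_, Finset.card_image_of_injOn fun p hp q hq heq => ?_⟩
  · rw [IsFClique, Finset.coe_image]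
    exact Set.Pairwise.image (hA.mono' fun p q h hm => h hm.of_foldl)
  · by_contra hne
    exact hA hp hq hne (Mergeable.of_eq heq).of_foldl

theorem IsMaxFClique.image_foldl {A : Finset V} (hA : IsMaxFClique δ A) (u : List α) :
    IsMaxFClique δ (A.image fun p => u.foldl δ p) := by
  obtain ⟨himg, hcard⟩ := hA.1.image_foldl u
  exact ⟨himg, hcard ▸ hA.2⟩

theorem IsStronglyConnected.exists_isMaxFClique_mem [Fintype V] (hsc : IsStronglyConnected δ)
    (p : V) : ∃ A, IsMaxFClique δ A ∧ p ∈ A := by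
  classical
  obtain ⟨A, hA, hmax⟩ := Finset.exists_max_image (Finset.univ.powerset.filter (IsFClique δ))
    Finset.card ⟨{p}, by simp [IsFClique]⟩
  have hA' : IsMaxFClique δ A := ⟨(Finset.mem_filter.1 hA).2, fun B hB => hmax B (by simpa)⟩
  obtain ⟨x, hx⟩ := Finset.card_pos.1 (hA'.2 {p} (by simp [IsFClique]))
  obtain ⟨u, hu⟩ := hsc x p
  exact ⟨_, hA'.image_foldl u, Finset.mem_image.2 ⟨x, hx, hu⟩⟩

/-- Otherwise, for some word `u`, the images under `u` of `A` and of `w.foldl δ p` would form a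
larger F-clique. -/
theorem IsMaxFClique.stablePair {A : Finset V} (hA : IsMaxFClique δ A) {p : V} (hp : p ∈ A)
    {w : List α} (hw : ∀ y ∈ A, y ≠ p → w.foldl δ y = y) : StablePair δ p (w.foldl δ p) := by
  intro u
  by_contra hu
  have hkey : ∀ y ∈ A, ¬ Mergeable δ (u.foldl δ y) (u.foldl δ (w.foldl δ p)) := by
    intro y hy hm
    rcases eq_or_ne y p with rfl | hyp
    · exact hu hm
    · rw [← hw y hy hyp] at hm
      exact hA.1 hy hp hyp hm.of_foldl.of_foldl
  have hnot : u.foldl δ (w.foldl δ p) ∉ A.image fun y => u.foldl δ y := by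
    intro hmem
    obtain ⟨y, hy, heq⟩ := Finset.mem_image.1 hmem
    exact hkey y hy (.of_eq heq)
  obtain ⟨himg, hcard⟩ := hA.1.image_foldl u
  have hclique : IsFClique δ (insert (u.foldl δ (w.foldl δ p)) (A.image fun y => u.foldl δ y)) := by
    rw [IsFClique, Finset.coe_insert]
    refine himg.insert fun b hb _ => ?_
    obtain ⟨y, hy, rfl⟩ := Finset.mem_image.1 hb
    exact ⟨fun hm => hkey y hy hm.symm, hkey y hy⟩
  have := hA.2 _ hclique
  rw [Finset.card_insert_of_notMem hnot, hcard] at this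
  omega

end FClique

section ExistsStablePair

variable {V α : Type*} [Fintype V] [DecidableEq V] {E : V → α → V}

theorem exists_stablePair_of_hasUniqueTopTree [Nonempty V] (hsc : IsStronglyConnected E)
    {g : V → V} (hg : IsSpanning E g) (htop : HasUniqueTopTree g) :
    ∃ c : V → Equiv.Perm α, ∃ p q, p ≠ q ∧ StablePair (recolor E c) p q := by
  classical
  obtain ⟨hL, r, hr⟩ := htop
  set L := maxLevel g
  choose σ hσ using hg
  obtain ⟨p₀, hp₀⟩ := exists_level_eq_maxLevel g
  set a₀ := σ p₀
  set c : V → Equiv.Perm α := fun v => Equiv.swap a₀ (σ v)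
  have hrep : ∀ m p, (List.replicate m a₀).foldl (recolor E c) p = g^[m] p :=
    foldl_replicate fun v => by simp [recolor, c, hσ]
  obtain ⟨A, hA, hp₀A⟩ := (hsc.recolor c).exists_isMaxFClique_mem p₀
  have hlow : ∀ y ∈ A, y ≠ p₀ → level g y < L := fun y hy hne => by
    refine lt_of_le_of_ne (level_le_maxLevel g y) fun hyL => hA.1 hy hp₀A hne ?_
    exact ⟨List.replicate L a₀, by rw [hrep, hrep, hr y hyL, hr p₀ hp₀]⟩
  set q := g^[L - 1] p₀
  have hper : ∀ y ∈ A.image fun p => (List.replicate (L - 1) a₀).foldl (recolor E c) p,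
      y ≠ q → y ∈ periodicPts g := by
    simp only [Finset.mem_image, hrep]
    rintro _ ⟨x, hx, rfl⟩ hne
    exact level_le_iff.1 (by have := hlow x hx (by rintro rfl; exact hne rfl); omega)
  set T := (Fintype.card V).factorial
  have hstable := (hA.image_foldl (List.replicate (L - 1) a₀)).stablePair
    (Finset.mem_image.2 ⟨p₀, hp₀A, hrep _ _⟩) (w := List.replicate T a₀) fun y hy hne => by
      rw [hrep]
      exact isPeriodicPt_factorial_card_of_mem_periodicPts (hper y hy hne)
  refine ⟨c, q, _, fun heq => ?_, hstable⟩
  have hq : level g q = 1 := by rw [level_iterate, hp₀]; omega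
  have hT : g^[T] q ∈ periodicPts g := level_le_iff.1 (hq ▸ Nat.factorial_pos _)
  rw [← hrep, ← heq] at hT
  exact (lt_level_iff (f := g) (x := q) (n := 0)).1 (by omega) hT

theorem exists_recolor_stablePair [Nonempty α] (hsc : IsStronglyConnected E)
    (hmeet : ∃ p q a b, p ≠ q ∧ E p a = E q b) :
    ∃ c : V → Equiv.Perm α, ∃ p q, p ≠ q ∧ StablePair (recolor E c) p q := by
  have : Nonempty V := let ⟨p, _⟩ := hmeet; ⟨p⟩
  rcases exists_hasUniqueTopTree_or_bunches hsc hmeet with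
    ⟨g, hg, htop⟩ | ⟨b₁, b₂, r, hne, h₁, h₂⟩
  · exact exists_stablePair_of_hasUniqueTopTree hsc hg htop
  · exact ⟨fun _ => 1, b₁, b₂, hne, stablePair_of_forall_eq (fun _ => h₁ _) (fun _ => h₂ _)⟩

end ExistsStablePair

section Period

variable {V α : Type*} {ℓ : ℕ}

def IsClosedWalkLength (E : V → α → V) (m : ℕ) : Prop :=
  ∃ (v : V) (w : List α), w.length = m ∧ w.foldl E v = v

/-- Without two arcs from distinct vertices into one vertex, the strongly connected graph is a
single cycle, whose length divides `ℓ`. -/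
theorem IsStronglyConnected.eq_of_map_eq [Nonempty α] {E : V → α → V} {P : V → ZMod ℓ}
    (hsc : IsStronglyConnected E) (hP : ∀ v a, P (E v a) = P v + 1)
    (hgcd : ∀ d, (∀ m, 0 < m → IsClosedWalkLength E m → d ∣ m) → d ∣ ℓ)
    (hinj : ∀ p q a b, E p a = E q b → p = q) {p q : V} (hpq : P p = P q) : p = q := by
  obtain ⟨a⟩ := ‹Nonempty α›
  choose s b hs using hsc.exists_apply_eq
  have hwalk : ∀ (w : List α) u, s^[w.length] (w.foldl E u) = u := by
    intro w
    induction w with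
    | nil => exact fun _ => rfl
    | cons x w ih =>
      intro u
      rw [List.foldl_cons, List.length_cons, iterate_succ_apply', ih, hinj _ _ _ _ (hs (E u x))]
  have hqper : q ∈ periodicPts s := by
    obtain ⟨w, hw⟩ := hsc (E q a) q
    have := hwalk (a :: w) q
    rw [List.foldl_cons, hw, List.length_cons] at this
    exact mk_mem_periodicPts (Nat.succ_pos _) this
  have hdvd : minimalPeriod s q ∣ ℓ := hgcd _ fun m _ ⟨v, w, hlen, hw⟩ => by
    obtain ⟨w', hw'⟩ := hsc v q
    have hv := hwalk w' v
    rw [hw'] at hv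
    have hper : IsPeriodicPt s m v := by
      have := hwalk w v
      rwa [hw, hlen] at this
    rw [← minimalPeriod_apply_iterate hqper, hv]
    exact hper.minimalPeriod_dvd
  obtain ⟨w, hw⟩ := hsc p q
  have hlen : (w.length : ZMod ℓ) = 0 := by
    have := map_foldl_eq_add_length hP w p
    rw [hw, hpq] at this
    exact add_eq_left.1 this.symm
  have := hwalk w p
  rw [hw, ((isPeriodicPt_minimalPeriod s q).trans_dvd
    (hdvd.trans ((ZMod.natCast_eq_zero_iff _ _).1 hlen)))] at this
  exact this.symm

end Period

section Quotient

variable {V α : Type*} (δ : V → α → V)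

def quotientAutomaton : Quotient (stableSetoid δ) → α → Quotient (stableSetoid δ) :=
  fun κ a => Quotient.map (fun p => δ p a) (fun _ _ h => StablePair.foldl h [a]) κ

variable {δ}

theorem quotientAutomaton_foldl (w : List α) (p : V) :
    w.foldl (quotientAutomaton δ) ⟦p⟧ = ⟦w.foldl δ p⟧ := by
  induction w generalizing p with
  | nil => rfl
  | cons a w ih => exact ih (δ p a)

theorem recolor_quotientAutomaton_foldl (cQ : Quotient (stableSetoid δ) → Equiv.Perm α)
    (w : List α) (p : V) : w.foldl (recolor (quotientAutomaton δ) cQ) ⟦p⟧ =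
      ⟦w.foldl (fun v x => δ v (cQ ⟦v⟧ x)) p⟧ := by
  induction w generalizing p with
  | nil => rfl
  | cons a w ih => exact ih _

theorem StablePair.of_recolor_quotientAutomaton {cQ : Quotient (stableSetoid δ) → Equiv.Perm α}
    {p q : V} (h : StablePair (recolor (quotientAutomaton δ) cQ) ⟦p⟧ ⟦q⟧) :
    StablePair (fun v x => δ v (cQ ⟦v⟧ x)) p q := by
  intro u
  obtain ⟨wQ, hwQ⟩ := h u
  simp only [recolor_quotientAutomaton_foldl, ← List.foldl_append] at hwQ
  have hst : StablePair (fun v x => δ v (cQ ⟦v⟧ x)) _ _ :=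
    (Quotient.exact hwQ).relabel fun a b hab => by rw [Quotient.sound hab]
  obtain ⟨w, hw⟩ := hst.mergeable
  exact ⟨wQ ++ w, by simpa only [List.foldl_append] using hw⟩

theorem IsStronglyConnected.quotientAutomaton (hsc : IsStronglyConnected δ) :
    IsStronglyConnected (quotientAutomaton δ) := fun κ κ' =>
  Quotient.inductionOn₂ κ κ' fun u v => by
    obtain ⟨w, hw⟩ := hsc u v
    exact ⟨w, by rw [quotientAutomaton_foldl, hw]⟩

theorem IsClosedWalkLength.quotientAutomaton_recolor {E : V → α → V} {m : ℕ}
    (c : V → Equiv.Perm α) (h : IsClosedWalkLength E m) :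
    IsClosedWalkLength (quotientAutomaton (recolor E c)) m := by
  obtain ⟨v, w, rfl, hw⟩ := h
  obtain ⟨w', hlen, hw'⟩ := exists_foldl_recolor_eq E c w v
  exact ⟨⟦v⟧, w', hlen, by rw [quotientAutomaton_foldl, hw', hw]⟩

end Quotient

theorem exists_recolor_forall_stablePair {V α : Type*} [Fintype V]
    [Nonempty α] {ℓ : ℕ} {E : V → α → V} {P : V → ZMod ℓ} (hsc : IsStronglyConnected E)
    (hP : ∀ v a, P (E v a) = P v + 1)
    (hgcd : ∀ d, (∀ m, 0 < m → IsClosedWalkLength E m → d ∣ m) → d ∣ ℓ) :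
    ∃ c : V → Equiv.Perm α, ∀ p q, P p = P q → StablePair (recolor E c) p q := by
  classical
  induction hn : Fintype.card V using Nat.strong_induction_on generalizing V with
  | _ n ih =>
  by_cases htriv : ∀ p q, P p = P q → p = q
  · exact ⟨fun _ => 1, fun p q hpq => htriv p q hpq ▸ .refl p⟩
  push Not at htriv
  obtain ⟨p₁, q₁, hP₁, hne⟩ := htriv
  have hmeet : ∃ p q a b, p ≠ q ∧ E p a = E q b := by
    by_contra! h
    exact hne (hsc.eq_of_map_eq hP hgcd
      (fun p q a b hab => by_contra fun hpq => h p q a b hpq hab) hP₁)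
  obtain ⟨c₀, p, q, hpq, hst⟩ := exists_recolor_stablePair hsc hmeet
  have hcard : Fintype.card (Quotient (stableSetoid (recolor E c₀))) < n :=
    hn ▸ Fintype.card_lt_of_surjective_not_injective _ Quotient.mk_surjective
      fun h => hpq (h (Quotient.sound hst))
  have hPδ : ∀ v a, P (recolor E c₀ v a) = P v + 1 := fun v a => hP v _
  obtain ⟨cQ, hcQ⟩ := ih _ hcard (hsc.recolor c₀).quotientAutomaton
    (P := Quotient.lift P fun _ _ => StablePair.map_eq hPδ)
    (fun κ a => Quotient.inductionOn κ fun v => hPδ v a)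
    (fun d hd => hgcd d fun m hm hwalk => hd m hm (hwalk.quotientAutomaton_recolor c₀)) rfl
  exact ⟨fun v => (cQ ⟦v⟧).trans (c₀ v), fun p q hpq =>
    StablePair.of_recolor_quotientAutomaton (hcQ ⟦p⟧ ⟦q⟧ hpq)⟩

theorem exists_foldl_eq_of_forall_stablePair {V α : Type*} [Finite V] [Nonempty V]
    {δ : V → α → V} (S : Set V) (h : ∀ p ∈ S, ∀ q ∈ S, StablePair δ p q) :
    ∃ (w : List α) (r : V), ∀ v ∈ S, w.foldl δ v = r := by
  classical
  obtain ⟨T, rfl⟩ := (Set.toFinite S).exists_finset_coe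
  induction T using Finset.induction_on with
  | empty => exact ⟨[], Classical.arbitrary V, by simp⟩
  | insert a T _ ih =>
    simp only [Finset.coe_insert, Set.mem_insert_iff, Finset.mem_coe] at h ⊢
    obtain ⟨w, r, hw⟩ := ih fun p hp q hq => h p (.inr hp) q (.inr hq)
    rcases T.eq_empty_or_nonempty with rfl | ⟨b, hb⟩
    · exact ⟨[], a, by simp⟩
    obtain ⟨w', hw'⟩ := ((h a (.inl rfl) b (.inr hb)).foldl w).mergeable
    refine ⟨w ++ w', w'.foldl δ r, ?_⟩
    rintro v (rfl | hv)
    · rw [List.foldl_append, hw', hw b hb]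
    · rw [List.foldl_append, hw v hv]

end RoadColoring

theorem stmt14_general {V : Type*} [Fintype V] [Nonempty V] (k ℓ : ℕ) (hk : 0 < k)
    (E : V → Fin k → V)
    (hsc : ∀ u v : V, ∃ w : List (Fin k), w.foldl E u = v)
    (P : V → ZMod ℓ) (hP : ∀ (v : V) (j : Fin k), P (E v j) = P v + 1)
    (hgcd : ∀ d : ℕ,
      (∀ m : ℕ, 0 < m →
        (∃ (v : V) (w : List (Fin k)), w.length = m ∧ w.foldl E v = v) → d ∣ m) →
      d ∣ ℓ)
    (S : Set V) :
    (∃ c : V → Equiv.Perm (Fin k), ∃ (w : List (Fin k)) (q : V),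
        ∀ v ∈ S, w.foldl (fun p x => E p (c p x)) v = q) ↔
      ∃ i : ZMod ℓ, ∀ v ∈ S, P v = i := by
  constructor
  · rintro ⟨c, w, q, hsync⟩
    refine ⟨P q - w.length, fun v hv => ?_⟩
    rw [← hsync v hv, RoadColoring.map_foldl_eq_add_length (δ := fun p x => E p (c p x))
      (fun v a => hP v _)]
    ring
  · rintro ⟨i, hi⟩
    have : Nonempty (Fin k) := ⟨⟨0, hk⟩⟩
    obtain ⟨c, hc⟩ := RoadColoring.exists_recolor_forall_stablePair hsc hP hgcd
    exact ⟨c, RoadColoring.exists_foldl_eq_of_forall_stablePair S fun p hp q hq =>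
      hc p q ((hi p hp).trans (hi q hq).symm)⟩

/-- Subset road coloring: a strongly connected digraph with all out-degrees
equal to `k` (out-arcs enumerated by `E : V → Fin k → V`), with `ℓ` the gcd of
its cycle lengths and `P : V → ZMod ℓ` the corresponding cyclic partition,
admits an arc coloring (a permutation of the out-arc labels at each vertex)
making a subset `S` of vertices synchronizing iff `S` lies inside one part. -/
theorem stmt14 {V : Type*} [Fintype V] [Nonempty V] (k ℓ : ℕ) (hk : 0 < k)
    (hℓ : 0 < ℓ) (E : V → Fin k → V)
    (hsc : ∀ u v : V, ∃ w : List (Fin k), w.foldl E u = v)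
    (P : V → ZMod ℓ) (hP : ∀ (v : V) (j : Fin k), P (E v j) = P v + 1)
    (hdvd : ∀ m : ℕ, 0 < m →
      (∃ (v : V) (w : List (Fin k)), w.length = m ∧ w.foldl E v = v) → ℓ ∣ m)
    (hgcd : ∀ d : ℕ,
      (∀ m : ℕ, 0 < m →
        (∃ (v : V) (w : List (Fin k)), w.length = m ∧ w.foldl E v = v) → d ∣ m) →
      d ∣ ℓ)
    (S : Set V) :
    (∃ c : V → Equiv.Perm (Fin k), ∃ (w : List (Fin k)) (q : V),
        ∀ v ∈ S, w.foldl (fun p x => E p (c p x)) v = q) ↔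
      ∃ i : ZMod ℓ, ∀ v ∈ S, P v = i :=
  stmt14_general k ℓ hk E hsc P hP hgcd S
end

section
/- In a monotonic automaton with states ordered q₁ < ... < qₙ, if a subset S of states can be mapped by some word to a state q strictly below min S (or strictly above max S), then S is synchronizing and, provided every state can reach q by taking transitions only toward smaller (respectively larger) states, S can be synchronized by a word of length at most n − 1. -/
/-!
A descending run from `p` to `q` can drop every letter that fixes the current state; what is
left descends strictly, so it has length at most `#{x | x < p}`. If every state descends to `q`,
then `q` is the least state, and by monotonicity a shortened descending run from the greatest
state sends every state to `q`, with length at most `n - 1`.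
-/

section MonotoneAutomaton

open Finset

variable {Q A : Type*}

def IsDescendingRun [LE Q] (δ : Q → A → Q) (p : Q) (w : List A) : Prop :=
  ∀ i < w.length, (w.take (i + 1)).foldl δ p ≤ (w.take i).foldl δ p

section LE

variable [LE Q] {δ : Q → A → Q}

@[simp]
theorem isDescendingRun_cons {p : Q} {a : A} {w : List A} :
    IsDescendingRun δ p (a :: w) ↔ δ p a ≤ p ∧ IsDescendingRun δ (δ p a) w := by
  simp only [IsDescendingRun, List.length_cons]
  constructor
  · intro h
    refine ⟨by simpa using h 0 (by omega), fun i hi => ?_⟩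
    simpa using h (i + 1) (by omega)
  · rintro ⟨hhead, htail⟩ (_ | i) hi
    · simpa using hhead
    · simpa using htail i (by omega)

end LE

theorem IsDescendingRun.foldl_le [Preorder Q] {δ : Q → A → Q} :
    ∀ {p : Q} {w : List A}, IsDescendingRun δ p w → w.foldl δ p ≤ p
  | _, [], _ => le_rfl
  | _, _ :: _, h => by
    rw [isDescendingRun_cons] at h
    exact h.2.foldl_le.trans h.1

section LinearOrder

variable [Fintype Q] [LinearOrder Q] {δ : Q → A → Q}

theorem IsDescendingRun.exists_foldl_eq_length_le :
    ∀ {p : Q} {w : List A}, IsDescendingRun δ p w →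
      ∃ v : List A, v.foldl δ p = w.foldl δ p ∧ v.length ≤ #{x | x < p}
  | _, [], _ => ⟨[], rfl, by simp⟩
  | p, a :: w, h => by
    rw [isDescendingRun_cons] at h
    obtain ⟨hstep, htail⟩ := h
    obtain ⟨v, hv, hlen⟩ := htail.exists_foldl_eq_length_le
    rw [List.foldl_cons]
    rcases hstep.eq_or_lt with hfix | hdown
    · rw [hfix] at hv hlen ⊢
      exact ⟨v, hv, hlen⟩
    · have hsub : univ.filter (· < δ p a) ⊆ univ.filter (· < p) :=
        monotone_filter_right _ fun _ _ (hx : _ < δ p a) => hx.trans hdown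
      have hcard : #{x | x < δ p a} < #{x | x < p} :=
        card_lt_card <| (ssubset_iff_of_subset hsub).mpr ⟨δ p a, by simpa using hdown, by simp⟩
      exact ⟨a :: v, hv, by simp only [List.length_cons]; omega⟩

theorem card_filter_lt_le_card_sub_one (p : Q) : #{x | x < p} ≤ Fintype.card Q - 1 := by
  have : #{x | x < p} < Fintype.card Q :=
    card_lt_card <| filter_ssubset.mpr ⟨p, mem_univ p, lt_irrefl p⟩
  omega

theorem exists_forall_foldl_eq_length_le_of_forall_isDescendingRun
    (hmono : ∀ a : A, Monotone (fun p => δ p a)) (q : Q)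
    (hreach : ∀ p : Q, ∃ w : List A, w.foldl δ p = q ∧ IsDescendingRun δ p w) :
    ∃ w : List A, (∀ p, w.foldl δ p = q) ∧ w.length ≤ Fintype.card Q - 1 := by
  have hq_le : ∀ p, q ≤ p := fun p => by
    obtain ⟨w, hw, hrun⟩ := hreach p
    exact hw ▸ hrun.foldl_le
  have : Nonempty Q := ⟨q⟩
  obtain ⟨top, htop⟩ := Finite.exists_max (id : Q → Q)
  obtain ⟨w, hw, hrun⟩ := hreach top
  obtain ⟨v, hv, hlen⟩ := hrun.exists_foldl_eq_length_le
  refine ⟨v, fun p => le_antisymm ?_ (hq_le _), hlen.trans (card_filter_lt_le_card_sub_one top)⟩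
  calc v.foldl δ p ≤ v.foldl δ top := List.foldl_monotone hmono v (htop p)
    _ = q := hv.trans hw

end LinearOrder

end MonotoneAutomaton

/-- In a monotonic `n`-state automaton: if a subset `S` can be mapped by some
word to a state `q` strictly below `min S` (respectively strictly above
`max S`), then `S` is synchronizing, and provided every state can reach `q` by
taking transitions only toward smaller (respectively larger) states, `S` can
be synchronized by a word of length at most `n - 1`. -/
theorem stmt16 {Q A : Type*} [Fintype Q] [LinearOrder Q] {n : ℕ}
    (hn : Fintype.card Q = n)
    (δ : Q → A → Q) (hmono : ∀ x : A, Monotone (fun q => δ q x))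
    (S : Set Q) (q : Q) :
    ((∃ w : List A, ∀ s ∈ S, w.foldl δ s = q) → (∀ s ∈ S, q < s) →
      ((∃ (w : List A) (p : Q), ∀ s ∈ S, w.foldl δ s = p) ∧
        ((∀ p : Q, ∃ w : List A, w.foldl δ p = q ∧
            ∀ i < w.length, (w.take (i + 1)).foldl δ p ≤ (w.take i).foldl δ p) →
          ∃ (w : List A) (p : Q), (∀ s ∈ S, w.foldl δ s = p) ∧ w.length ≤ n - 1))) ∧
    ((∃ w : List A, ∀ s ∈ S, w.foldl δ s = q) → (∀ s ∈ S, s < q) →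
      ((∃ (w : List A) (p : Q), ∀ s ∈ S, w.foldl δ s = p) ∧
        ((∀ p : Q, ∃ w : List A, w.foldl δ p = q ∧
            ∀ i < w.length, (w.take i).foldl δ p ≤ (w.take (i + 1)).foldl δ p) →
          ∃ (w : List A) (p : Q), (∀ s ∈ S, w.foldl δ s = p) ∧ w.length ≤ n - 1))) := by
  have hsync : (∃ w : List A, ∀ s ∈ S, w.foldl δ s = q) →
      ∃ (w : List A) (p : Q), ∀ s ∈ S, w.foldl δ s = p :=
    fun ⟨w, hw⟩ => ⟨w, q, hw⟩
  refine ⟨fun hS _ => ⟨hsync hS, fun hreach => ?_⟩, fun hS _ => ⟨hsync hS, fun hreach => ?_⟩⟩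
  · obtain ⟨w, hw, hlen⟩ :=
      exists_forall_foldl_eq_length_le_of_forall_isDescendingRun hmono q hreach
    exact ⟨w, q, fun s _ => hw s, hn ▸ hlen⟩
  · -- ascending runs in `Q` are descending runs in `Qᵒᵈ`
    obtain ⟨w, hw, hlen⟩ := exists_forall_foldl_eq_length_le_of_forall_isDescendingRun
      (Q := Qᵒᵈ) (fun a => (hmono a).dual) q hreach
    exact ⟨w, q, fun s _ => hw s, hn ▸ hlen⟩
end

section
/- Consider k partial monotonic automata each obtained from the 3-state counter gadget by deleting the failure state f_i: states {s_i, t_i}, alphabet {a₁,...,a_k}, with δ_i(s_i, a_i) = t_i, δ_i(t_i, a_j) = s_i for j > i, δ_i undefined on (s_i, a_j) for j > i, and self-loops otherwise. A word over {a₁,...,a_k} maps every s_i to t_i (with all intermediate transitions defined) only if its length is at least 2^k − 1, and the bound 2^k − 1 is attained. -/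
/-!
Lower bound: if `w` drives every automaton `i < m` from `sᵢ` to `tᵢ`, then automaton `m - 1`
forces a letter `a_{m-1}` into `w`. Any occurrence of it splits `w = u a_{m-1} v`, and both
`u` and `v` must again drive every `i < m - 1` from `sᵢ` to `tᵢ`: `u` because `a_{m-1}` is
undefined on `sᵢ`, and `v` because `a_{m-1}` resets `tᵢ` to `sᵢ`. So the minimal length
satisfies `L(m) ≥ 2 L(m-1) + 1`.
The bound is attained by the binary counter word `W₀ = ε`, `W_{n+1} = W_n a_n W_n`.
-/

/-- Run of a partial automaton on a word. -/
def prun {Q A : Type*} (δ : Q → A → Option Q) : Q → List A → Option Q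
  | q, [] => some q
  | q, x :: w => (δ q x).bind (fun q' => prun δ q' w)

/-- The `i`-th counter gadget with the failure state removed: states are
`Bool` (`false = sᵢ`, `true = tᵢ`), alphabet `Fin k`.
`δᵢ(sᵢ, aᵢ) = tᵢ`; for `j > i`: `δᵢ(tᵢ, aⱼ) = sᵢ` and `δᵢ(sᵢ, aⱼ)` is
undefined; all other transitions are self-loops. -/
def cdelta (k : ℕ) (i : Fin k) (b : Bool) (a : Fin k) : Option Bool :=
  if a = i then some true
  else if i < a then (if b then some false else none)
  else some b

theorem prun_append {Q A : Type*} (δ : Q → A → Option Q) (q : Q) (u v : List A) :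
    prun δ q (u ++ v) = (prun δ q u).bind (fun q' => prun δ q' v) := by
  induction u generalizing q with
  | nil => rfl
  | cons x u ih => cases h : δ q x <;> simp [prun, h, ih]

theorem prun_cons_of_eq {Q A : Type*} {δ : Q → A → Option Q} {q q' : Q} {x : A}
    (h : δ q x = some q') (w : List A) :
    prun δ q (x :: w) = prun δ q' w := by
  simp [prun, h]

def counterWord : (n : ℕ) → List (Fin n)
  | 0 => []
  | n + 1 => (counterWord n).map Fin.castSucc ++ Fin.last n :: (counterWord n).map Fin.castSucc

theorem length_counterWord (n : ℕ) : (counterWord n).length = 2 ^ n - 1 := by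
  induction n with
  | zero => rfl
  | succ n ih =>
    have := Nat.one_le_two_pow (n := n)
    simp only [counterWord, List.length_append, List.length_map, List.length_cons, ih, pow_succ]
    omega

section Counter

variable {k : ℕ}

theorem cdelta_monotone (i x : Fin k) {a b a' b' : Bool} (hab : a ≤ b)
    (ha : cdelta k i a x = some a') (hb : cdelta k i b x = some b') : a' ≤ b' := by
  unfold cdelta at ha hb
  split_ifs at ha hb <;> cases a <;> cases b <;> simp_all

theorem cdelta_of_lt {i x : Fin k} (h : x < i) (b : Bool) : cdelta k i b x = some b := by
  simp [cdelta, h.ne, not_lt.2 h.le]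

theorem cdelta_self (i : Fin k) (b : Bool) : cdelta k i b i = some true := by
  simp [cdelta]

theorem cdelta_true_of_lt {i x : Fin k} (h : i < x) : cdelta k i true x = some false := by
  simp [cdelta, h.ne', h]

theorem cdelta_false_of_lt {i x : Fin k} (h : i < x) : cdelta k i false x = none := by
  simp [cdelta, h.ne', h]

theorem prun_cdelta_of_forall_lt {i : Fin k} {w : List (Fin k)} (hw : ∀ x ∈ w, x < i)
    (b : Bool) :
    prun (cdelta k i) b w = some b := by
  induction w with
  | nil => rfl
  | cons x w ih =>
    rw [prun_cons_of_eq (cdelta_of_lt (hw x List.mem_cons_self) b)]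
    exact ih fun y hy => hw y (List.mem_cons_of_mem x hy)

theorem prun_cdelta_false_ne_true_of_notMem {i : Fin k} {w : List (Fin k)} (hw : i ∉ w) :
    prun (cdelta k i) false w ≠ some true := by
  induction w with
  | nil => simp [prun]
  | cons x w ih =>
    obtain ⟨hxi, hw⟩ := not_or.1 (List.mem_cons.not.1 hw)
    rcases lt_or_gt_of_ne hxi with h | h
    · simp [prun, cdelta_false_of_lt h]
    · rw [prun_cons_of_eq (cdelta_of_lt h false)]
      exact ih hw

theorem prun_cdelta_split {i x : Fin k} (h : i < x) {u v : List (Fin k)}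
    (huv : prun (cdelta k i) false (u ++ x :: v) = some true) :
    prun (cdelta k i) false u = some true ∧ prun (cdelta k i) false v = some true := by
  rw [prun_append] at huv
  rcases hu : prun (cdelta k i) false u with _ | _ | _
  · simp [hu] at huv
  · simp [hu, prun, cdelta_false_of_lt h] at huv
  · simp only [hu, Option.bind_some, prun_cons_of_eq (cdelta_true_of_lt h)] at huv
    exact ⟨rfl, huv⟩

theorem two_pow_sub_one_le_length_of_prun_cdelta (m : ℕ) (hm : m ≤ k) (w : List (Fin k))
    (hw : ∀ i : Fin k, (i : ℕ) < m → prun (cdelta k i) false w = some true) :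
    2 ^ m - 1 ≤ w.length := by
  induction m generalizing w with
  | zero => simp
  | succ m ih =>
    set x : Fin k := ⟨m, hm⟩
    have hx : x ∈ w := by
      by_contra hx
      exact prun_cdelta_false_ne_true_of_notMem hx (hw x (Nat.lt_succ_self m))
    obtain ⟨u, v, rfl⟩ := List.append_of_mem hx
    have hsplit (i : Fin k) (hi : (i : ℕ) < m) :=
      prun_cdelta_split (x := x) hi (hw i (by omega))
    have hu := ih (Nat.le_of_succ_le hm) u fun i hi => (hsplit i hi).1
    have hv := ih (Nat.le_of_succ_le hm) v fun i hi => (hsplit i hi).2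
    simp only [List.length_append, List.length_cons]
    have := Nat.one_le_two_pow (n := m)
    rw [pow_succ]
    omega

theorem prun_cdelta_counterWord (n : ℕ) (hn : n ≤ k) {i : Fin k} (hi : (i : ℕ) < n)
    (b : Bool) :
    prun (cdelta k i) b ((counterWord n).map (Fin.castLE hn)) = some true := by
  induction n generalizing b with
  | zero => omega
  | succ n ih =>
    have hn' : n ≤ k := Nat.le_of_succ_le hn
    have hlt : ∀ x ∈ (counterWord n).map (Fin.castLE hn'), (x : ℕ) < n := by
      simp only [List.mem_map]
      rintro _ ⟨y, -, rfl⟩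
      exact y.isLt
    set x : Fin k := ⟨n, hn⟩
    have hword : (counterWord (n + 1)).map (Fin.castLE hn)
        = (counterWord n).map (Fin.castLE hn') ++ x :: (counterWord n).map (Fin.castLE hn') := by
      simp [counterWord, Function.comp_def, x, Fin.ext_iff]
    rw [hword, prun_append]
    rcases Nat.lt_succ_iff_lt_or_eq.1 hi with hi | rfl
    · rw [ih hn' hi, Option.bind_some, prun_cons_of_eq (cdelta_true_of_lt (show i < x from hi))]
      exact ih hn' hi false
    · rw [prun_cdelta_of_forall_lt hlt, Option.bind_some, prun_cons_of_eq (cdelta_self i b)]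
      exact prun_cdelta_of_forall_lt hlt true

end Counter

/-- A word over `{a₁, …, a_k}` that maps every `sᵢ` to `tᵢ` with all
intermediate transitions defined has length at least `2^k - 1`, and this bound
is attained. Each gadget `cdelta k i` is monotonic (for the order
`false < true`). -/
theorem stmt17 (k : ℕ) :
    (∀ (i : Fin k) (x : Fin k) (a b a' b' : Bool), a ≤ b →
      cdelta k i a x = some a' → cdelta k i b x = some b' → a' ≤ b') ∧
    (∃ w : List (Fin k), w.length = 2 ^ k - 1 ∧
      ∀ i : Fin k, prun (cdelta k i) false w = some true) ∧
    (∀ w : List (Fin k), (∀ i : Fin k, prun (cdelta k i) false w = some true) →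
      2 ^ k - 1 ≤ w.length) := by
  refine ⟨fun i x _ _ _ _ => cdelta_monotone i x, ?_, ?_⟩
  · exact ⟨(counterWord k).map (Fin.castLE le_rfl), by simp [length_counterWord],
      fun i => prun_cdelta_counterWord k le_rfl i.isLt false⟩
  · exact fun w hw => two_pow_sub_one_le_length_of_prun_cdelta k le_rfl w fun i _ => hw i
end

section
/- In any monotonic automaton A with state order q₁ < ... < qₙ, if w = w₁...w_m is a shortest word synchronizing a subset S with q_ℓ = min S and q_r = max S, then the sequence of pairs (δ(q_ℓ, w₁...w_k), δ(q_r, w₁...w_k)) for k = 0, 1, ..., m contains no repeated pair, satisfies δ(q_ℓ, prefix) ≤ δ(q_r, prefix) for every prefix, and only the final pair has equal components. -/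
/-!
Monotonicity does all the work: every word preserves the order, so `δ(q_ℓ, u) ≤ δ(s, u) ≤ δ(q_r, u)`
for `s ∈ S`, and a word synchronizes `S` as soon as it identifies `q_ℓ` and `q_r`. Hence a prefix
identifying them is already synchronizing, so it is all of `w`; and if two prefixes of lengths
`k₁ < k₂` gave the same pair, cutting out the factor between them would leave a strictly shorter
word that still identifies `q_ℓ` and `q_r`.
-/

section Synchronizing

variable {Q A : Type*} {δ : Q → A → Q}

theorem foldl_take_append_drop_of_foldl_take_eq {w : List A} {k₁ k₂ : ℕ} {q : Q}
    (h : (w.take k₁).foldl δ q = (w.take k₂).foldl δ q) :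
    (w.take k₁ ++ w.drop k₂).foldl δ q = w.foldl δ q := by
  rw [List.foldl_append, h, ← List.foldl_append, List.take_append_drop]

variable [PartialOrder Q] {S : Set Q} {ql qr : Q}

theorem exists_foldl_eq_of_foldl_eq (hmono : ∀ x : A, Monotone (fun q => δ q x))
    (hmin : ∀ s ∈ S, ql ≤ s) (hmax : ∀ s ∈ S, s ≤ qr) {u : List A}
    (h : u.foldl δ ql = u.foldl δ qr) : ∃ p : Q, ∀ s ∈ S, u.foldl δ s = p :=
  ⟨u.foldl δ ql, fun s hs => le_antisymm (h ▸ List.foldl_monotone hmono u (hmax s hs))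
    (List.foldl_monotone hmono u (hmin s hs))⟩

theorem length_le_of_foldl_eq (hmono : ∀ x : A, Monotone (fun q => δ q x))
    (hmin : ∀ s ∈ S, ql ≤ s) (hmax : ∀ s ∈ S, s ≤ qr) {w : List A}
    (hshort : ∀ w' : List A, (∃ p : Q, ∀ s ∈ S, w'.foldl δ s = p) → w.length ≤ w'.length)
    (u : List A) (h : u.foldl δ ql = u.foldl δ qr) : w.length ≤ u.length :=
  hshort u (exists_foldl_eq_of_foldl_eq hmono hmin hmax h)

end Synchronizing

/-- For a shortest word `w` synchronizing a subset `S` of a monotonic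
automaton, with `q_ℓ = min S` and `q_r = max S`: the sequence of pairs of
images of `q_ℓ` and `q_r` under the prefixes of `w` contains no repeated pair,
the image of `q_ℓ` is always at most the image of `q_r`, and only the final
pair has equal components. -/
theorem stmt18 {Q A : Type*} [LinearOrder Q] (δ : Q → A → Q)
    (hmono : ∀ x : A, Monotone (fun q => δ q x))
    (S : Set Q) (ql qr : Q) (hql : ql ∈ S) (hqr : qr ∈ S)
    (hmin : ∀ s ∈ S, ql ≤ s) (hmax : ∀ s ∈ S, s ≤ qr)
    (w : List A) (hw : ∃ p : Q, ∀ s ∈ S, w.foldl δ s = p)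
    (hshort : ∀ w' : List A, (∃ p : Q, ∀ s ∈ S, w'.foldl δ s = p) →
      w.length ≤ w'.length) :
    (∀ k1 ≤ w.length, ∀ k2 ≤ w.length,
      ((w.take k1).foldl δ ql, (w.take k1).foldl δ qr) =
        ((w.take k2).foldl δ ql, (w.take k2).foldl δ qr) → k1 = k2) ∧
    (∀ k ≤ w.length, (w.take k).foldl δ ql ≤ (w.take k).foldl δ qr) ∧
    (∀ k ≤ w.length, (w.take k).foldl δ ql = (w.take k).foldl δ qr →
      k = w.length) := by
  have shortest := length_le_of_foldl_eq hmono hmin hmax hshort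
  obtain ⟨p, hp⟩ := hw
  have no_repeat : ∀ k₁ k₂, k₁ < k₂ → k₂ ≤ w.length →
      ((w.take k₁).foldl δ ql, (w.take k₁).foldl δ qr) ≠
        ((w.take k₂).foldl δ ql, (w.take k₂).foldl δ qr) := by
    intro k₁ k₂ hlt hk₂ h
    obtain ⟨hl, hr⟩ := Prod.mk.inj h
    have := shortest (w.take k₁ ++ w.drop k₂) <| by
      rw [foldl_take_append_drop_of_foldl_take_eq hl, foldl_take_append_drop_of_foldl_take_eq hr,
        hp ql hql, hp qr hqr]
    simp only [List.length_append, List.length_take, List.length_drop] at this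
    omega
  refine ⟨fun k₁ hk₁ k₂ hk₂ h => ?_,
    fun k _ => List.foldl_monotone hmono _ (hmin qr hqr), fun k hk h => ?_⟩
  · by_contra hne
    rcases lt_or_gt_of_ne hne with hlt | hgt
    exacts [no_repeat k₁ k₂ hlt hk₂ h, no_repeat k₂ k₁ hgt hk₁ h.symm]
  · have := shortest _ h
    simp only [List.length_take] at this
    omega
end
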